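/- Boldface Lopez–Escobar for the Scott topology: an isomorphism-invariant set B ⊆ Mod(τ) is Π⁰_α (boldface, in Selivanov's Borel hierarchy on the Scott topology) if and only if B = Mod(φ) for some (not necessarily computable) Π^p_α sentence φ, for every countable ordinal α ≥ 1. -/

import Mathlib

namespace LE

/-- Positive infinitary `τ`-formulas.  Relation symbols are indexed by `ℕ`,
with relation `0` reserved for equality and relation `1` for inequality;
`rel r v` is the atomic formula `R_r(x_{v 0}, …)` and `nrel` its negation;
`fconj`/`fdisj` are finite conjunctions of atoms / disjunctions of negated
atoms; quantifiers use named variables. -/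
inductive TForm : Type
  | verum : TForm
  | falsum : TForm
  | rel (r : ℕ) (v : List ℕ) : TForm
  | nrel (r : ℕ) (v : List ℕ) : TForm
  | fconj (l : List (ℕ × List ℕ)) : TForm
  | fdisj (l : List (ℕ × List ℕ)) : TForm
  | cand (φ ψ : TForm) : TForm
  | cor (φ ψ : TForm) : TForm
  | disj (f : ℕ → TForm) : TForm
  | conj (f : ℕ → TForm) : TForm
  | ex (x : ℕ) (φ : TForm) : TForm
  | all (x : ℕ) (φ : TForm) : TForm

namespace TForm

/-- Formal negation of a positive `τ`-formula. -/
def neg : TForm → TForm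
  | verum => falsum
  | falsum => verum
  | rel r v => nrel r v
  | nrel r v => rel r v
  | fconj l => fdisj l
  | fdisj l => fconj l
  | cand φ ψ => cor φ.neg ψ.neg
  | cor φ ψ => cand φ.neg ψ.neg
  | disj f => conj fun i => (f i).neg
  | conj f => disj fun i => (f i).neg
  | ex x φ => all x φ.neg
  | all x φ => ex x φ.neg

end TForm

/-- Satisfaction of a `τ`-formula in the structure `S` (with universe `ω`,
relations `S r`) under the assignment `s`. -/
def TSat (S : ℕ → List ℕ → Prop) (s : ℕ → ℕ) : TForm → Prop
  | .verum => True
  | .falsum => False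
  | .rel r v => S r (v.map s)
  | .nrel r v => ¬ S r (v.map s)
  | .fconj l => ∀ x ∈ l, S x.1 (x.2.map s)
  | .fdisj l => ∃ x ∈ l, ¬ S x.1 (x.2.map s)
  | .cand φ ψ => TSat S s φ ∧ TSat S s ψ
  | .cor φ ψ => TSat S s φ ∨ TSat S s ψ
  | .disj f => ∃ i, TSat S s (f i)
  | .conj f => ∀ i, TSat S s (f i)
  | .ex x φ => ∃ a : ℕ, TSat S (Function.update s x a) φ
  | .all x φ => ∀ a : ℕ, TSat S (Function.update s x a) φ

/-- Iterated existential quantification over a finite block of variables. -/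
def exIter : List ℕ → TForm → TForm
  | [], φ => φ
  | x :: xs, φ => .ex x (exIter xs φ)

/-- Iterated universal quantification over a finite block of variables. -/
def allIter : List ℕ → TForm → TForm
  | [], φ => φ
  | x :: xs, φ => .all x (allIter xs φ)

mutual
  /-- The `Σ^p_α` hierarchy of positive infinitary `τ`-formulas. -/
  inductive TSigma : Ordinal → TForm → Prop
    | verum : TSigma 0 .verum
    | falsum : TSigma 0 .falsum
    | rel (r : ℕ) (v : List ℕ) : TSigma 0 (.rel r v)
    | fconj (l : List (ℕ × List ℕ)) : TSigma 0 (.fconj l)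
    | one (xs : ℕ → List ℕ) (ψ : ℕ → TForm) :
        (∀ i, TSigma 0 (ψ i)) →
        TSigma 1 (.disj fun i => exIter (xs i) (ψ i))
    | ge2a (α : Ordinal) (β : ℕ → Ordinal) (xs : ℕ → List ℕ) (φ ψ : ℕ → TForm) :
        2 ≤ α → (∀ i, β i < α) →
        (∀ i, TSigma (β i) (φ i)) → (∀ i, TPi (β i) (ψ i)) →
        TSigma α (.disj fun i => exIter (xs i) (.cand (φ i) (ψ i)))
    | ge2b (α : Ordinal) (β : ℕ → Ordinal) (xs : ℕ → List ℕ) (φ ψ : ℕ → TForm) :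
        2 ≤ α → (∀ i, β i < α) →
        (∀ i, TPi (β i) (φ i)) → (∀ i, TSigma (β i) (ψ i)) →
        TSigma α (.disj fun i => exIter (xs i) (.cand (φ i) (ψ i)))

  /-- The `Π^p_α` hierarchy of positive infinitary `τ`-formulas. -/
  inductive TPi : Ordinal → TForm → Prop
    | verum : TPi 0 .verum
    | falsum : TPi 0 .falsum
    | nrel (r : ℕ) (v : List ℕ) : TPi 0 (.nrel r v)
    | fdisj (l : List (ℕ × List ℕ)) : TPi 0 (.fdisj l)
    | one (xs : ℕ → List ℕ) (ψ : ℕ → TForm) :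
        (∀ i, TPi 0 (ψ i)) →
        TPi 1 (.conj fun i => allIter (xs i) (ψ i))
    | ge2a (α : Ordinal) (β : ℕ → Ordinal) (xs : ℕ → List ℕ) (φ ψ : ℕ → TForm) :
        2 ≤ α → (∀ i, β i < α) →
        (∀ i, TSigma (β i) (φ i)) → (∀ i, TPi (β i) (ψ i)) →
        TPi α (.conj fun i => allIter (xs i) (.cor (φ i) (ψ i)))
    | ge2b (α : Ordinal) (β : ℕ → Ordinal) (xs : ℕ → List ℕ) (φ ψ : ℕ → TForm) :
        2 ≤ α → (∀ i, β i < α) →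
        (∀ i, TPi (β i) (φ i)) → (∀ i, TSigma (β i) (ψ i)) →
        TPi α (.conj fun i => allIter (xs i) (.cor (φ i) (ψ i)))
end

end LE
namespace LE

/-- The `n`-th atomic `τ`-formula: a relation symbol together with the list
of (indices of) variables to which it is applied. -/
def atomEnum (n : ℕ) : ℕ × List ℕ := (n.unpair.1, Denumerable.ofNat (List ℕ) n.unpair.2)

/-- The code of the atomic formula `R_r(x_{v 0}, …)`. -/
def atomCode (r : ℕ) (v : List ℕ) : ℕ := Nat.pair r (Encodable.encode v)

/-- A structure with universe `ω` in a relational vocabulary containing `=`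
(relation `0`) and `≠` (relation `1`), each interpreted correctly. -/
def IsStr (S : ℕ → List ℕ → Prop) : Prop :=
  (∀ l, S 0 l ↔ ∃ a, l = [a, a]) ∧ (∀ l, S 1 l ↔ ∃ a b, a ≠ b ∧ l = [a, b])

/-- Isomorphism of structures with universe `ω`. -/
def Iso (S S' : ℕ → List ℕ → Prop) : Prop :=
  ∃ g : ℕ → ℕ, Function.Bijective g ∧ ∀ r l, S r l ↔ S' r (l.map g)

/-- The positive atomic diagram of a structure, as a subset of `ω`. -/
def Diag (S : ℕ → List ℕ → Prop) : Set ℕ :=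
  {n | S (atomEnum n).1 (atomEnum n).2}

/-- The structure whose positive atomic diagram is `D`. -/
def StrOf (D : Set ℕ) : ℕ → List ℕ → Prop :=
  fun r v => atomCode r v ∈ D

/-- The enumeration operator with set of axioms `W`, acting on subsets of `ω`:
`m ∈ W(X)` iff some axiom `(v, m) ∈ W` has its finite set `F_v ⊆ X`. -/
def enumOp (W : Set (ℕ × ℕ)) (X : Set ℕ) : Set ℕ :=
  {m | ∃ v, (v, m) ∈ W ∧ ∀ k ∈ (Denumerable.ofNat (List ℕ) v), k ∈ X}

/-- `W` is a computably enumerable set of pairs. -/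
def CEPairs (W : Set (ℕ × ℕ)) : Prop :=
  ∃ c : Nat.Partrec.Code, W = {p | (c.eval (Nat.pair p.1 p.2)).Dom}

end LE

namespace LE

/-- The space `Mod(τ)` of structures with universe `ω`. -/
def MStr : Type := {S : ℕ → List ℕ → Prop // IsStr S}

/-- The substructure ordering `⪯` on `Mod(τ)`. -/
def SleM (S T : MStr) : Prop := ∀ r l, S.1 r l → T.1 r l

/-- Scott-open subsets of `(Mod(τ), ⪯)`. -/
def ScottOpenM (U : Set MStr) : Prop :=
  (∀ S T, S ∈ U → SleM S T → T ∈ U) ∧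
  ∀ D : Set MStr, D.Nonempty → DirectedOn SleM D →
    ∀ T, (∀ S ∈ D, SleM S T) → (∀ T', (∀ S ∈ D, SleM S T') → SleM T T') →
      T ∈ U → (D ∩ U).Nonempty

/-- Selivanov's Borel hierarchy for the Scott topology on `Mod(τ)`. -/
inductive SelSigmaM : Ordinal → Set MStr → Prop
  | base (U : Set MStr) : ScottOpenM U → SelSigmaM 1 U
  | step (α : Ordinal) (β : ℕ → Ordinal) (B B' : ℕ → Set MStr) :
      1 < α → (∀ i, β i < α) →
      (∀ i, SelSigmaM (β i) (B i)) → (∀ i, SelSigmaM (β i) (B' i)) →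
      SelSigmaM α (⋃ i, B i \ B' i)

/-! ### Basic satisfaction lemmas -/

/-- Update an assignment on a block of variables by a block of values. -/
def updList (s : ℕ → ℕ) : List ℕ → List ℕ → (ℕ → ℕ)
  | [], _ => s
  | _ :: _, [] => s
  | x :: xs, a :: l => updList (Function.update s x a) xs l

theorem updList_nil {s : ℕ → ℕ} : ∀ xs : List ℕ, updList s xs [] = s := by
  intro xs; cases xs <;> rfl

theorem TSat_exIter {S : ℕ → List ℕ → Prop} :
    ∀ (xs : List ℕ) (s : ℕ → ℕ) (φ : TForm),
    TSat S s (exIter xs φ) ↔ ∃ l : List ℕ, TSat S (updList s xs l) φ := by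
  intro xs
  induction xs with
  | nil =>
    intro s φ
    constructor
    · intro h; exact ⟨[], h⟩
    · rintro ⟨l, h⟩; cases l <;> exact h
  | cons x xs ih =>
    intro s φ
    constructor
    · rintro ⟨a, h⟩
      rcases (ih _ φ).1 h with ⟨l, hl⟩
      exact ⟨a :: l, hl⟩
    · rintro ⟨l, h⟩
      cases l with
      | nil =>
        refine ⟨s x, (ih _ φ).2 ⟨[], ?_⟩⟩
        simpa [updList, updList_nil, Function.update_eq_self] using h
      | cons a l => exact ⟨a, (ih _ φ).2 ⟨l, h⟩⟩

theorem TSat_allIter {S : ℕ → List ℕ → Prop} :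
    ∀ (xs : List ℕ) (s : ℕ → ℕ) (φ : TForm),
    TSat S s (allIter xs φ) ↔ ∀ l : List ℕ, TSat S (updList s xs l) φ := by
  intro xs
  induction xs with
  | nil =>
    intro s φ
    constructor
    · intro h l; cases l <;> exact h
    · intro h; exact h []
  | cons x xs ih =>
    intro s φ
    constructor
    · intro h l
      cases l with
      | nil =>
        have := (ih _ φ).1 (h (s x))
        simpa [updList, updList_nil, Function.update_eq_self] using this []
      | cons a l => exact (ih _ φ).1 (h a) l
    · intro h a
      exact (ih _ φ).2 fun l => h (a :: l)

theorem updList_eq_of_not_mem {s : ℕ → ℕ} :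
    ∀ (xs : List ℕ) (l : List ℕ) (x : ℕ), x ∉ xs → updList s xs l x = s x := by
  intro xs
  induction xs generalizing s with
  | nil => intro l x _; rfl
  | cons y ys ih =>
    intro l x hx
    cases l with
    | nil => rfl
    | cons a l =>
      have hxy : x ≠ y := fun h => hx (h ▸ List.mem_cons_self)
      have := ih (s := Function.update s y a) l x (fun h => hx (List.mem_cons_of_mem _ h))
      simp only [updList, this, Function.update_apply, if_neg hxy]

theorem updList_get {s : ℕ → ℕ} :
    ∀ (xs : List ℕ) (l : List ℕ), xs.Nodup → xs.length = l.length →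
      ∀ (i : ℕ) (hi : i < xs.length) (hi' : i < l.length),
        updList s xs l (xs.get ⟨i, hi⟩) = l.get ⟨i, hi'⟩ := by
  intro xs
  induction xs generalizing s with
  | nil => intro l _ _ i hi; exact absurd hi (by simp)
  | cons y ys ih =>
    intro l hnd hlen i hi hi'
    cases l with
    | nil => simp at hlen
    | cons a l =>
      cases i with
      | zero =>
        simp only [List.get, updList]
        have : y ∉ ys := (List.nodup_cons.1 hnd).1
        rw [updList_eq_of_not_mem ys l y this, Function.update_self]
      | succ i =>
        simp only [List.get, updList]
        exact ih (s := Function.update s y a) l (List.nodup_cons.1 hnd).2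
          (by simpa using hlen) i (by simpa using hi) (by simpa using hi')

/-- Satisfaction of `fconj` depends only on the variables occurring in it. -/
theorem TSat_fconj_congr {S : ℕ → List ℕ → Prop} {s s' : ℕ → ℕ}
    (F : List (ℕ × List ℕ)) (h : ∀ p ∈ F, ∀ x ∈ p.2, s x = s' x) :
    TSat S s (.fconj F) ↔ TSat S s' (.fconj F) := by
  show (∀ p ∈ F, _) ↔ (∀ p ∈ F, _)
  refine forall₂_congr fun p hp => ?_
  have : p.2.map s = p.2.map s' := List.map_congr_left fun x hx => h p hp x hx
  rw [this]

theorem TSat_neg {S : ℕ → List ℕ → Prop} :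
    ∀ (φ : TForm) (s : ℕ → ℕ), TSat S s φ.neg ↔ ¬ TSat S s φ := by
  intro φ
  induction φ with
  | verum => intro s; simp [TForm.neg, TSat]
  | falsum => intro s; simp [TForm.neg, TSat]
  | rel r v => intro s; simp [TForm.neg, TSat]
  | nrel r v => intro s; simp [TForm.neg, TSat]
  | fconj l => intro s; simp [TForm.neg, TSat]
  | fdisj l => intro s; simp [TForm.neg, TSat]
  | cand φ ψ ih1 ih2 => intro s; simp [TForm.neg, TSat, ih1, ih2]; tauto
  | cor φ ψ ih1 ih2 => intro s; simp [TForm.neg, TSat, ih1, ih2, not_or]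
  | disj f ih => intro s; simp [TForm.neg, TSat, fun i => ih i s]
  | conj f ih => intro s; simp [TForm.neg, TSat, fun i => ih i s]
  | ex x φ ih => intro s; simp [TForm.neg, TSat, fun s => ih s]
  | all x φ ih => intro s; simp [TForm.neg, TSat, fun s => ih s]

theorem exIter_neg : ∀ (xs : List ℕ) (φ : TForm), (exIter xs φ).neg = allIter xs φ.neg := by
  intro xs
  induction xs with
  | nil => intro φ; rfl
  | cons x xs ih => intro φ; simp [exIter, allIter, TForm.neg, ih]

theorem allIter_neg : ∀ (xs : List ℕ) (φ : TForm), (allIter xs φ).neg = exIter xs φ.neg := by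
  intro xs
  induction xs with
  | nil => intro φ; rfl
  | cons x xs ih => intro φ; simp [exIter, allIter, TForm.neg, ih]

/-- Negation swaps the `Σ^p` and `Π^p` classes. -/
theorem neg_classes : ∀ (α : Ordinal) (φ : TForm),
    (TSigma α φ → TPi α φ.neg) ∧ (TPi α φ → TSigma α φ.neg) := by
  intro α
  induction α using WellFoundedLT.induction with
  | ind α ih =>
    intro φ
    constructor
    · intro h
      cases h with
      | verum => exact TPi.falsum
      | falsum => exact TPi.verum
      | rel r v => exact TPi.nrel r v
      | fconj l => exact TPi.fdisj l
      | one xs ψ hψ =>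
        have : (TForm.disj fun i => exIter (xs i) (ψ i)).neg
            = .conj fun i => allIter (xs i) (ψ i).neg := by
          simp [TForm.neg, exIter_neg]
        rw [this]
        exact TPi.one xs _ fun i => (ih 0 (by norm_num) (ψ i)).1 (hψ i)
      | ge2a α' β xs φ' ψ hα hβ h1 h2 =>
        have : (TForm.disj fun i => exIter (xs i) (.cand (φ' i) (ψ i))).neg
            = .conj fun i => allIter (xs i) (.cor (φ' i).neg (ψ i).neg) := by
          simp [TForm.neg, exIter_neg]
        rw [this]
        exact TPi.ge2b _ β xs _ _ hα hβ (fun i => (ih (β i) (hβ i) (φ' i)).1 (h1 i))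
          (fun i => (ih (β i) (hβ i) (ψ i)).2 (h2 i))
      | ge2b α' β xs φ' ψ hα hβ h1 h2 =>
        have : (TForm.disj fun i => exIter (xs i) (.cand (φ' i) (ψ i))).neg
            = .conj fun i => allIter (xs i) (.cor (φ' i).neg (ψ i).neg) := by
          simp [TForm.neg, exIter_neg]
        rw [this]
        exact TPi.ge2a _ β xs _ _ hα hβ (fun i => (ih (β i) (hβ i) (φ' i)).2 (h1 i))
          (fun i => (ih (β i) (hβ i) (ψ i)).1 (h2 i))
    · intro h
      cases h with
      | verum => exact TSigma.falsum
      | falsum => exact TSigma.verum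
      | nrel r v => exact TSigma.rel r v
      | fdisj l => exact TSigma.fconj l
      | one xs ψ hψ =>
        have : (TForm.conj fun i => allIter (xs i) (ψ i)).neg
            = .disj fun i => exIter (xs i) (ψ i).neg := by
          simp [TForm.neg, allIter_neg]
        rw [this]
        exact TSigma.one xs _ fun i => (ih 0 (by norm_num) (ψ i)).2 (hψ i)
      | ge2a α' β xs φ' ψ hα hβ h1 h2 =>
        have : (TForm.conj fun i => allIter (xs i) (.cor (φ' i) (ψ i))).neg
            = .disj fun i => exIter (xs i) (.cand (φ' i).neg (ψ i).neg) := by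
          simp [TForm.neg, allIter_neg]
        rw [this]
        exact TSigma.ge2b _ β xs _ _ hα hβ (fun i => (ih (β i) (hβ i) (φ' i)).1 (h1 i))
          (fun i => (ih (β i) (hβ i) (ψ i)).2 (h2 i))
      | ge2b α' β xs φ' ψ hα hβ h1 h2 =>
        have : (TForm.conj fun i => allIter (xs i) (.cor (φ' i) (ψ i))).neg
            = .disj fun i => exIter (xs i) (.cand (φ' i).neg (ψ i).neg) := by
          simp [TForm.neg, allIter_neg]
        rw [this]
        exact TSigma.ge2a _ β xs _ _ hα hβ (fun i => (ih (β i) (hβ i) (φ' i)).2 (h1 i))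
          (fun i => (ih (β i) (hβ i) (ψ i)).1 (h2 i))

/-! ### Ordinal helpers -/

theorem two_le_iff {γ : Ordinal} : 2 ≤ γ ↔ 1 < γ := by
  rw [← one_add_one_eq_two]; exact Order.add_one_le_iff

/-! ### Padding formulas to higher levels -/

theorem pad : ∀ γ : Ordinal, ∀ β φ, β ≤ γ →
    (TSigma β φ → ∃ φ', TSigma γ φ' ∧ ∀ S s, TSat S s φ' ↔ TSat S s φ) ∧
    (TPi β φ → ∃ φ', TPi γ φ' ∧ ∀ S s, TSat S s φ' ↔ TSat S s φ) := by
  intro γ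
  induction γ using WellFoundedLT.induction with
  | ind γ ih =>
    intro β φ hβγ
    rcases eq_or_lt_of_le hβγ with rfl | hlt
    · exact ⟨fun h => ⟨φ, h, fun _ _ => Iff.rfl⟩, fun h => ⟨φ, h, fun _ _ => Iff.rfl⟩⟩
    have hγ1 : (1 : Ordinal) ≤ γ := Order.one_le_iff_pos.2 ((zero_le (a := β)).trans_lt hlt)
    rcases eq_or_lt_of_le hγ1 with h1 | h2
    · -- γ = 1, β = 0
      have hβ0 : β = 0 := Ordinal.lt_one_iff_zero.1 (h1 ▸ hlt)
      subst hβ0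
      constructor
      · intro h
        refine ⟨.disj fun _ => φ, ?_, ?_⟩
        · rw [← h1]; exact TSigma.one (fun _ => []) (fun _ => φ) (fun _ => h)
        · intro S s; show (∃ _ : ℕ, _) ↔ _; simp
      · intro h
        refine ⟨.conj fun _ => φ, ?_, ?_⟩
        · rw [← h1]; exact TPi.one (fun _ => []) (fun _ => φ) (fun _ => h)
        · intro S s; show (∀ _ : ℕ, _) ↔ _; simp
    · -- 1 < γ, i.e. 2 ≤ γ
      have h2' : (2 : Ordinal) ≤ γ := two_le_iff.2 h2
      rcases eq_zero_or_pos β with rfl | hβpos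
      · constructor
        · intro h
          refine ⟨.disj fun _ => exIter [] (.cand φ .verum), ?_, ?_⟩
          · exact TSigma.ge2a γ (fun _ => 0) (fun _ => []) (fun _ => φ) (fun _ => .verum)
              h2' (fun _ => lt_of_lt_of_le zero_lt_one hγ1) (fun _ => h) (fun _ => TPi.verum)
          · intro S s
            show (∃ _ : ℕ, TSat S s φ ∧ True) ↔ _
            simp
        · intro h
          refine ⟨.conj fun _ => allIter [] (.cor .falsum φ), ?_, ?_⟩
          · exact TPi.ge2a γ (fun _ => 0) (fun _ => []) (fun _ => .falsum) (fun _ => φ)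
              h2' (fun _ => lt_of_lt_of_le zero_lt_one hγ1) (fun _ => TSigma.falsum) (fun _ => h)
          · intro S s
            show (∀ _ : ℕ, False ∨ TSat S s φ) ↔ _
            simp
      · -- 0 < β < γ
        have hβ1 : (1 : Ordinal) ≤ β := Order.one_le_iff_pos.2 hβpos
        obtain ⟨vPi, hvPi, hvsat⟩ := (ih β hlt 0 .verum (zero_le (a := β))).2 TPi.verum
        obtain ⟨vSig, hvSig, hvsat'⟩ := (ih β hlt 0 .falsum (zero_le (a := β))).1 TSigma.falsum
        constructor
        · intro h
          refine ⟨.disj fun _ => exIter [] (.cand φ vPi), ?_, ?_⟩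
          · exact TSigma.ge2a γ (fun _ => β) (fun _ => []) (fun _ => φ) (fun _ => vPi)
              h2' (fun _ => hlt) (fun _ => h) (fun _ => hvPi)
          · intro S s
            show (∃ _ : ℕ, TSat S s φ ∧ TSat S s vPi) ↔ _
            have := hvsat S s
            simp [this]; tauto
        · intro h
          refine ⟨.conj fun _ => allIter [] (.cor vSig φ), ?_, ?_⟩
          · exact TPi.ge2a γ (fun _ => β) (fun _ => []) (fun _ => vSig) (fun _ => φ)
              h2' (fun _ => hlt) (fun _ => hvSig) (fun _ => h)
          · intro S s
            show (∀ _ : ℕ, TSat S s vSig ∨ TSat S s φ) ↔ _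
            have := hvsat' S s
            simp only [this]
            constructor
            · intro hh
              rcases hh 0 with hf | hp
              · exact hf.elim
              · exact hp
            · intro hh _; exact Or.inr hh

/-! ### Normal form for `Π` formulas and conjunction of two `Π` formulas -/

universe u

theorem pi_shape {β : Ordinal.{u}} {ψ : TForm} (h : TPi β ψ) (hβ : 1 ≤ β) :
    (β = 1 ∧ ∃ (xs : ℕ → List ℕ) (f : ℕ → TForm), (∀ i, TPi.{u} 0 (f i)) ∧ ψ = .conj fun i => allIter (xs i) (f i)) ∨
    (2 ≤ β ∧ ∃ (βf : ℕ → Ordinal) (xs : ℕ → List ℕ) (A B : ℕ → TForm),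
      (∀ i, βf i < β) ∧ (∀ i, TSigma (βf i) (A i)) ∧ (∀ i, TPi (βf i) (B i)) ∧
      ∀ S s, TSat S s ψ ↔ ∀ n, TSat S s (allIter (xs n) (.cor (A n) (B n)))) := by
  cases h with
  | verum => exact absurd hβ (by simp)
  | falsum => exact absurd hβ (by simp)
  | nrel r v => exact absurd hβ (by simp)
  | fdisj l => exact absurd hβ (by simp)
  | one xs f hf => exact Or.inl ⟨rfl, xs, f, fun i => hf i, rfl⟩
  | ge2a β' βf xs A B h2 hβf h1 h2' =>
    exact Or.inr ⟨h2, βf, xs, A, B, hβf, h1, h2', fun S s => Iff.rfl⟩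
  | ge2b β' βf xs A B h2 hβf h1 h2' =>
    refine Or.inr ⟨h2, βf, xs, B, A, hβf, h2', h1, fun S s => ?_⟩
    show (∀ n, _) ↔ _
    refine forall_congr' fun n => ?_
    rw [TSat_allIter, TSat_allIter]
    exact forall_congr' fun l => or_comm

/-- Interleaving two `ℕ`-indexed families. -/
def merge2 {X : Type _} (f g : ℕ → X) : ℕ → X := fun n => if n % 2 = 0 then f (n / 2) else g (n / 2)

theorem forall_merge2 {X : Type _} {f g : ℕ → X} {Q : X → Prop} :
    (∀ n, Q (merge2 f g n)) ↔ (∀ m, Q (f m)) ∧ (∀ m, Q (g m)) := by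
  constructor
  · intro h
    constructor
    · intro m
      have := h (2 * m)
      simpa [merge2, Nat.mul_mod_right, Nat.mul_div_cancel_left m (by norm_num : 0 < 2)] using this
    · intro m
      have := h (2 * m + 1)
      have h1 : (2 * m + 1) % 2 = 1 := by omega
      have h2 : (2 * m + 1) / 2 = m := by omega
      simpa [merge2, h1, h2] using this
  · rintro ⟨h1, h2⟩ n
    by_cases hn : n % 2 = 0 <;> simp [merge2, hn] <;> [exact h1 _; exact h2 _]

theorem combinePi : ∀ (β : Ordinal) (ψ₁ ψ₂ : TForm), 1 ≤ β → TPi β ψ₁ → TPi β ψ₂ →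
    ∃ ψ, TPi β ψ ∧ ∀ S s, TSat S s ψ ↔ (TSat S s ψ₁ ∧ TSat S s ψ₂) := by
  intro β ψ₁ ψ₂ hβ h1 h2
  rcases pi_shape h1 hβ with ⟨rfl, xs1, f1, hf1, rfl⟩ | ⟨hβ2, βf1, xs1, A1, B1, hl1, hA1, hB1, hs1⟩
  · rcases pi_shape h2 hβ with ⟨-, xs2, f2, hf2, rfl⟩ | ⟨hβ2, -⟩
    · refine ⟨.conj fun n => allIter (merge2 xs1 xs2 n) (merge2 f1 f2 n), ?_, ?_⟩
      · refine TPi.one _ _ fun i => ?_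
        unfold merge2; split
        · exact hf1 _
        · exact hf2 _
      · intro S s
        show (∀ n, _) ↔ (∀ i, _) ∧ (∀ i, _)
        have key : ∀ n, TSat S s (allIter (merge2 xs1 xs2 n) (merge2 f1 f2 n))
            ↔ merge2 (fun i => TSat S s (allIter (xs1 i) (f1 i)))
              (fun i => TSat S s (allIter (xs2 i) (f2 i))) n := by
          intro n; unfold merge2; split <;> rfl
        exact (forall_congr' key).trans (forall_merge2 (Q := fun p : Prop => p))
    · exact absurd hβ2 (by norm_num)
  · rcases pi_shape h2 hβ with ⟨rfl, -⟩ | ⟨-, βf2, xs2, A2, B2, hl2, hA2, hB2, hs2⟩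
    · exact absurd hβ2 (by norm_num)
    · refine ⟨.conj fun n => allIter (merge2 xs1 xs2 n)
        (.cor (merge2 A1 A2 n) (merge2 B1 B2 n)), ?_, ?_⟩
      · refine TPi.ge2a β (merge2 βf1 βf2) _ _ _ hβ2 ?_ ?_ ?_ <;>
          (intro i; unfold merge2; split)
        · exact hl1 _
        · exact hl2 _
        · exact hA1 _
        · exact hA2 _
        · exact hB1 _
        · exact hB2 _
      · intro S s
        show (∀ n, _) ↔ _
        rw [hs1 S s, hs2 S s]
        have key : ∀ n, TSat S s (allIter (merge2 xs1 xs2 n)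
              (.cor (merge2 A1 A2 n) (merge2 B1 B2 n)))
            ↔ merge2 (fun i => TSat S s (allIter (xs1 i) (.cor (A1 i) (B1 i))))
              (fun i => TSat S s (allIter (xs2 i) (.cor (A2 i) (B2 i)))) n := by
          intro n; unfold merge2; split <;> rfl
        exact (forall_congr' key).trans (forall_merge2 (Q := fun p : Prop => p))

/-! ### The distinctness formula -/

def allPairs : List ℕ → List (ℕ × ℕ)
  | [] => []
  | x :: l => (l.map fun y => (x, y)) ++ allPairs l

def distBody (d : List ℕ) (k : ℕ) : TForm :=
  if h : k < (allPairs d).length then .fdisj [(0, [((allPairs d).get ⟨k, h⟩).1,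
      ((allPairs d).get ⟨k, h⟩).2])] else .verum

def distForm (d : List ℕ) : TForm := .conj fun k => allIter [] (distBody d k)

theorem distForm_pi (d : List ℕ) : TPi 1 (distForm d) := by
  refine TPi.one (fun _ => []) _ fun k => ?_
  unfold distBody
  by_cases h : k < (allPairs d).length
  · rw [dif_pos h]; exact TPi.fdisj _
  · rw [dif_neg h]; exact TPi.verum

theorem TSat_distForm {S : ℕ → List ℕ → Prop} {s : ℕ → ℕ} {d : List ℕ} :
    TSat S s (distForm d) ↔ ∀ p ∈ allPairs d, ¬ S 0 [s p.1, s p.2] := by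
  show (∀ k, TSat S s (distBody d k)) ↔ _
  constructor
  · intro h p hp
    rcases List.mem_iff_get.1 hp with ⟨⟨k, hk⟩, rfl⟩
    have := h k
    rw [distBody, dif_pos hk] at this
    simpa [TSat] using this
  · intro h k
    rw [distBody]
    by_cases hk : k < (allPairs d).length
    · rw [dif_pos hk]
      have := h _ (List.get_mem (allPairs d) ⟨k, hk⟩)
      simpa [TSat] using this
    · rw [dif_neg hk]; trivial

theorem allPairs_mem : ∀ (d : List ℕ) (p : ℕ × ℕ), p ∈ allPairs d → p.1 ∈ d ∧ p.2 ∈ d := by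
  intro d
  induction d with
  | nil => intro p hp; simp [allPairs] at hp
  | cons x l ih =>
    intro p hp
    simp only [allPairs, List.mem_append, List.mem_map] at hp
    rcases hp with ⟨y, hy, rfl⟩ | hp
    · exact ⟨List.mem_cons_self, List.mem_cons_of_mem _ hy⟩
    · exact ⟨List.mem_cons_of_mem _ (ih p hp).1, List.mem_cons_of_mem _ (ih p hp).2⟩

theorem allPairs_ne : ∀ (d : List ℕ), d.Nodup → ∀ p ∈ allPairs d, p.1 ≠ p.2 := by
  intro d
  induction d with
  | nil => intro _ p hp; simp [allPairs] at hp
  | cons x l ih =>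
    intro hnd p hp
    simp only [allPairs, List.mem_append, List.mem_map] at hp
    rcases hp with ⟨y, hy, rfl⟩ | hp
    · exact fun h => (List.nodup_cons.1 hnd).1 (by rw [show x = y from h]; exact hy)
    · exact ih (List.nodup_cons.1 hnd).2 p hp

theorem allPairs_cover : ∀ (d : List ℕ) (x y : ℕ), x ∈ d → y ∈ d → x ≠ y →
    (x, y) ∈ allPairs d ∨ (y, x) ∈ allPairs d := by
  intro d
  induction d with
  | nil => intro x y hx; simp at hx
  | cons z l ih =>
    intro x y hx hy hxy
    rcases List.mem_cons.1 hx with rfl | hx'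
    · rcases List.mem_cons.1 hy with rfl | hy'
      · exact absurd rfl hxy
      · left; rw [allPairs]; exact List.mem_append.2 (Or.inl (List.mem_map.2 ⟨y, hy', rfl⟩))
    · rcases List.mem_cons.1 hy with rfl | hy'
      · right; rw [allPairs]; exact List.mem_append.2 (Or.inl (List.mem_map.2 ⟨x, hx', rfl⟩))
      · rcases ih x y hx' hy' hxy with h | h
        · left; rw [allPairs]; exact List.mem_append.2 (Or.inr h)
        · right; rw [allPairs]; exact List.mem_append.2 (Or.inr h)
/-! ### Finite injective conditions and Baire category on bijections of ℕ -/

/-- Finite conditions: lists of (input, output) pairs. -/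
abbrev Cond : Type := List (ℕ × ℕ)

/-- A condition is (the graph of) a finite partial injection. -/
def CInj (u : Cond) : Prop := ∀ p ∈ u, ∀ q ∈ u, (p.1 = q.1 ↔ p.2 = q.2)

/-- Extension of conditions (as sets of pairs). -/
def CSub (u v : Cond) : Prop := ∀ p ∈ u, p ∈ v

/-- A function obeys a condition. -/
def CExt (u : Cond) (g : ℕ → ℕ) : Prop := ∀ p ∈ u, g p.1 = p.2

theorem CSub.refl (u : Cond) : CSub u u := fun _ hp => hp

theorem CSub.trans {u v w : Cond} (h1 : CSub u v) (h2 : CSub v w) : CSub u w :=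
  fun p hp => h2 p (h1 p hp)

theorem CSub.nil (v : Cond) : CSub ([] : Cond) v := fun p hp => absurd hp List.not_mem_nil

theorem CSub.append_left (u v : Cond) : CSub u (u ++ v) :=
  fun p hp => List.mem_append.2 (Or.inl hp)

theorem CSub.append_right (u v : Cond) : CSub v (u ++ v) :=
  fun p hp => List.mem_append.2 (Or.inr hp)

theorem CExt.mono {u v : Cond} {g : ℕ → ℕ} (h : CSub u v) (hg : CExt v g) : CExt u g :=
  fun p hp => hg p (h p hp)

theorem cinj_of_ext {w : Cond} {g : ℕ → ℕ} (hg : Function.Injective g) (he : CExt w g) :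
    CInj w := by
  intro p hp q hq
  constructor
  · intro h; rw [← he p hp, ← he q hq, h]
  · intro h
    apply hg
    rw [he p hp, he q hq, h]

theorem cinj_sub {u v : Cond} (h : CSub u v) (hv : CInj v) : CInj u :=
  fun p hp q hq => hv p (h p hp) q (h q hq)

/-- Every finite partial injection extends to a bijection of `ℕ`. -/
theorem exists_bij_ext : ∀ u : Cond, CInj u → ∃ e : Equiv.Perm ℕ, CExt u e := by
  intro u
  induction u with
  | nil => exact fun _ => ⟨Equiv.refl ℕ, fun p hp => absurd hp List.not_mem_nil⟩
  | cons ab u ih =>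
    intro hu
    obtain ⟨a, b⟩ := ab
    obtain ⟨e, he⟩ := ih (cinj_sub (fun p hp => List.mem_cons_of_mem _ hp) hu)
    refine ⟨e.trans (Equiv.swap (e a) b), ?_⟩
    intro p hp
    rcases List.mem_cons.1 hp with rfl | hp'
    · simp [Equiv.swap_apply_left]
    · show Equiv.swap (e a) b (e p.1) = p.2
      rw [he p hp']
      by_cases hb : p.2 = b
      · have : p.1 = a := (hu p hp (a, b) (List.mem_cons_self)).2 hb
        rw [hb, ← this, he p hp', hb, Equiv.swap_apply_right]
      · have hne1 : p.1 ≠ a := fun h => hb ((hu p hp (a, b) (List.mem_cons_self)).1 h)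
        have hne2 : p.2 ≠ e a := fun h => hne1 (e.injective (by rw [he p hp', h]))
        exact Equiv.swap_apply_of_ne_of_ne hne2 hb

/-- `A` is comeager below the condition `u`. -/
def ComeagerIn (u : Cond) (A : Set (ℕ → ℕ)) : Prop :=
  ∃ D : ℕ → Cond → Prop,
    (∀ n v, CSub u v → CInj v → ∃ w, CSub v w ∧ CInj w ∧ D n w) ∧
    (∀ g : ℕ → ℕ, Function.Bijective g → CExt u g →
      (∀ n, ∃ w, D n w ∧ CExt w g) → g ∈ A)

def NonmeagerIn (u : Cond) (A : Set (ℕ → ℕ)) : Prop := ¬ ComeagerIn u Aᶜ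

theorem comeagerIn_of_all {u : Cond} {A : Set (ℕ → ℕ)}
    (h : ∀ g : ℕ → ℕ, Function.Bijective g → CExt u g → g ∈ A) : ComeagerIn u A :=
  ⟨fun _ _ => True, fun _ v hv hvi => ⟨v, CSub.refl v, hvi, trivial⟩,
    fun g hb he _ => h g hb he⟩

theorem comeager_mono_bij {u : Cond} {A B : Set (ℕ → ℕ)}
    (hAB : ∀ g : ℕ → ℕ, Function.Bijective g → g ∈ A → g ∈ B)
    (h : ComeagerIn u A) : ComeagerIn u B := by
  obtain ⟨D, hD, hG⟩ := h
  exact ⟨D, hD, fun g hb he hm => hAB g hb (hG g hb he hm)⟩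

theorem comeager_sub {u v : Cond} {A : Set (ℕ → ℕ)} (hsub : CSub u v)
    (h : ComeagerIn u A) : ComeagerIn v A := by
  obtain ⟨D, hD, hG⟩ := h
  refine ⟨D, ?_, ?_⟩
  · intro n w hw hwi
    exact hD n w (hsub.trans hw) hwi
  · intro g hb he hm
    exact hG g hb (CExt.mono hsub he) hm

theorem comeager_iInter {u : Cond} {A : ℕ → Set (ℕ → ℕ)}
    (h : ∀ n, ComeagerIn u (A n)) : ComeagerIn u (⋂ n, A n) := by
  choose D hD hG using h
  refine ⟨fun k => D k.unpair.1 k.unpair.2, ?_, ?_⟩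
  · intro k v hv hvi
    exact hD k.unpair.1 k.unpair.2 v hv hvi
  · intro g hb he hm
    refine Set.mem_iInter.2 fun n => hG n g hb he fun m => ?_
    have := hm (Nat.pair n m)
    simpa [Nat.unpair_pair] using this

theorem comeager_inter {u : Cond} {A B : Set (ℕ → ℕ)}
    (hA : ComeagerIn u A) (hB : ComeagerIn u B) : ComeagerIn u (A ∩ B) := by
  have h : ∀ n : ℕ, ComeagerIn u (if n = 0 then A else B) := by
    intro n; by_cases hn : n = 0 <;> simp [hn, hA, hB]
  have := comeager_iInter h
  refine comeager_mono_bij (fun g _ hg => ?_) this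
  have h0 := Set.mem_iInter.1 hg 0
  have h1 := Set.mem_iInter.1 hg 1
  simp at h0 h1
  exact ⟨h0, h1⟩
/-! ### Existence of generic bijections (Baire category theorem) -/

/-- A number strictly larger than everything in the list. -/
def freshAbove (l : List ℕ) : ℕ := l.foldr max 0 + 1

theorem lt_freshAbove {l : List ℕ} {x : ℕ} (h : x ∈ l) : x < freshAbove l := by
  have : x ≤ l.foldr max 0 := by
    induction l with
    | nil => simp at h
    | cons a l ih =>
      rcases List.mem_cons.1 h with rfl | h'
      · exact le_max_left _ _
      · exact (ih h').trans (le_max_right _ _)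
  exact Nat.lt_succ_of_le this

theorem cinj_cons {v : Cond} {a b : ℕ} (hv : CInj v)
    (ha : ∀ p ∈ v, p.1 ≠ a) (hb : ∀ p ∈ v, p.2 ≠ b) : CInj ((a, b) :: v) := by
  intro p hp q hq
  rcases List.mem_cons.1 hp with rfl | hp' <;> rcases List.mem_cons.1 hq with rfl | hq'
  · simp
  · constructor
    · intro h; exact absurd h.symm (ha q hq')
    · intro h; exact absurd h.symm (hb q hq')
  · constructor
    · intro h; exact absurd h (ha p hp')
    · intro h; exact absurd h (hb p hp')
  · exact hv p hp' q hq'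

theorem fst_lt_fresh {v : Cond} {p : ℕ × ℕ} (hp : p ∈ v) :
    p.1 < freshAbove (v.map Prod.fst) := lt_freshAbove (List.mem_map.2 ⟨p, hp, rfl⟩)

theorem snd_lt_fresh {v : Cond} {p : ℕ × ℕ} (hp : p ∈ v) :
    p.2 < freshAbove (v.map Prod.snd) := lt_freshAbove (List.mem_map.2 ⟨p, hp, rfl⟩)

def ensure1 (n : ℕ) (v : Cond) : Cond :=
  if n ∈ v.map Prod.fst then v else (n, freshAbove (v.map Prod.snd)) :: v

def ensure2 (n : ℕ) (v : Cond) : Cond :=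
  if n ∈ v.map Prod.snd then v else (freshAbove (v.map Prod.fst), n) :: v

/-- Extend a condition so that `n` is in its domain and in its range. -/
def ensure (n : ℕ) (v : Cond) : Cond := ensure2 n (ensure1 n v)

theorem ensure1_sub (n : ℕ) (v : Cond) : CSub v (ensure1 n v) := by
  unfold ensure1; split
  · exact CSub.refl v
  · exact fun p hp => List.mem_cons_of_mem _ hp

theorem ensure2_sub (n : ℕ) (v : Cond) : CSub v (ensure2 n v) := by
  unfold ensure2; split
  · exact CSub.refl v
  · exact fun p hp => List.mem_cons_of_mem _ hp

theorem ensure_sub (n : ℕ) (v : Cond) : CSub v (ensure n v) :=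
  (ensure1_sub n v).trans (ensure2_sub n (ensure1 n v))

theorem ensure1_cinj (n : ℕ) {v : Cond} (hv : CInj v) : CInj (ensure1 n v) := by
  unfold ensure1; split
  · exact hv
  · rename_i hmem
    refine cinj_cons hv (fun p hp h => hmem ?_) (fun p hp h => ?_)
    · rw [← h]; exact List.mem_map.2 ⟨p, hp, rfl⟩
    · exact absurd (h ▸ snd_lt_fresh hp) (lt_irrefl _)

theorem ensure2_cinj (n : ℕ) {v : Cond} (hv : CInj v) : CInj (ensure2 n v) := by
  unfold ensure2; split
  · exact hv
  · rename_i hmem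
    refine cinj_cons hv (fun p hp h => ?_) (fun p hp h => hmem ?_)
    · exact absurd (h ▸ fst_lt_fresh hp) (lt_irrefl _)
    · rw [← h]; exact List.mem_map.2 ⟨p, hp, rfl⟩

theorem ensure_cinj (n : ℕ) {v : Cond} (hv : CInj v) : CInj (ensure n v) :=
  ensure2_cinj n (ensure1_cinj n hv)

theorem ensure_dom (n : ℕ) (v : Cond) : ∃ b, (n, b) ∈ ensure n v := by
  have : ∃ b, (n, b) ∈ ensure1 n v := by
    unfold ensure1; split
    · rename_i h
      rcases List.mem_map.1 h with ⟨p, hp, hp1⟩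
      exact ⟨p.2, by rwa [show (n, p.2) = p from Prod.ext hp1.symm rfl]⟩
    · exact ⟨_, List.mem_cons_self⟩
  obtain ⟨b, hb⟩ := this
  exact ⟨b, ensure2_sub n (ensure1 n v) (n, b) hb⟩

theorem ensure_ran (n : ℕ) (v : Cond) : ∃ a, (a, n) ∈ ensure n v := by
  show ∃ a, (a, n) ∈ ensure2 n (ensure1 n v)
  unfold ensure2; split
  · rename_i h
    rcases List.mem_map.1 h with ⟨p, hp, hp2⟩
    exact ⟨p.1, by rwa [show (p.1, n) = p from Prod.ext rfl hp2.symm]⟩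
  · exact ⟨_, List.mem_cons_self⟩

attribute [local instance] Classical.propDecidable

/-- The fusion sequence for a given dense family. -/
noncomputable def fuse (u : Cond) (D : ℕ → Cond → Prop)
    (hD : ∀ n v, CSub u v → CInj v → ∃ w, CSub v w ∧ CInj w ∧ D n w) : ℕ → Cond
  | 0 => u
  | n + 1 =>
    if h : CSub u (fuse u D hD n) ∧ CInj (fuse u D hD n) then
      ensure n (Classical.choose (hD n (fuse u D hD n) h.1 h.2))
    else fuse u D hD n

theorem fuse_inv (u : Cond) (D : ℕ → Cond → Prop) (hu : CInj u)
    (hD : ∀ n v, CSub u v → CInj v → ∃ w, CSub v w ∧ CInj w ∧ D n w) :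
    ∀ n, (CSub u (fuse u D hD n) ∧ CInj (fuse u D hD n)) ∧
      CSub (fuse u D hD n) (fuse u D hD (n + 1)) ∧
      (∃ w, D n w ∧ CSub w (fuse u D hD (n + 1))) ∧
      (∃ b, (n, b) ∈ fuse u D hD (n + 1)) ∧ (∃ a, (a, n) ∈ fuse u D hD (n + 1)) := by
  have key : ∀ n, (CSub u (fuse u D hD n) ∧ CInj (fuse u D hD n)) := by
    intro n
    induction n with
    | zero => exact ⟨CSub.refl u, hu⟩
    | succ n ih =>
      show CSub u _ ∧ CInj _
      rw [fuse]
      rw [dif_pos ih]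
      obtain ⟨hsub, hinj, _⟩ := Classical.choose_spec (hD n (fuse u D hD n) ih.1 ih.2)
      constructor
      · exact (ih.1.trans hsub).trans (ensure_sub _ _)
      · exact ensure_cinj _ hinj
  intro n
  refine ⟨key n, ?_, ?_, ?_, ?_⟩ <;> rw [fuse, dif_pos (key n)]
  · obtain ⟨hsub, hinj, _⟩ := Classical.choose_spec (hD n (fuse u D hD n) (key n).1 (key n).2)
    exact hsub.trans (ensure_sub _ _)
  · obtain ⟨hsub, hinj, hd⟩ := Classical.choose_spec (hD n (fuse u D hD n) (key n).1 (key n).2)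
    exact ⟨_, hd, ensure_sub _ _⟩
  · exact ensure_dom _ _
  · exact ensure_ran _ _

theorem fuse_mono (u : Cond) (D : ℕ → Cond → Prop) (hu : CInj u)
    (hD : ∀ n v, CSub u v → CInj v → ∃ w, CSub v w ∧ CInj w ∧ D n w) :
    ∀ m n, m ≤ n → CSub (fuse u D hD m) (fuse u D hD n) := by
  intro m n h
  induction n with
  | zero => rw [Nat.le_zero.1 h]; exact CSub.refl _
  | succ n ih =>
    rcases Nat.lt_or_ge m (n+1) with h' | h'
    · exact (ih (Nat.lt_succ_iff.1 h')).trans (fuse_inv u D hu hD n).2.1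
    · rw [Nat.le_antisymm h h']; exact CSub.refl _

/-- The Baire category theorem for our forcing: comeager sets below an
injective condition contain bijections extending that condition. -/
theorem generic_exists {u : Cond} {A : Set (ℕ → ℕ)} (hu : CInj u)
    (h : ComeagerIn u A) : ∃ g : ℕ → ℕ, Function.Bijective g ∧ CExt u g ∧ g ∈ A := by
  obtain ⟨D, hD, hG⟩ := h
  set f := fuse u D hD with hf
  have inv := fuse_inv u D hu hD
  have mono := fuse_mono u D hu hD
  -- membership in the limit
  have muniq : ∀ a b b' m n, (a, b) ∈ f m → (a, b') ∈ f n → b = b' := by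
    intro a b b' m n hm hn
    have h1 : (a, b) ∈ f (max m n) := mono m _ (le_max_left _ _) _ hm
    have h2 : (a, b') ∈ f (max m n) := mono n _ (le_max_right _ _) _ hn
    exact ((inv (max m n)).1.2 (a, b) h1 (a, b') h2).1 rfl
  have muniq' : ∀ a a' b m n, (a, b) ∈ f m → (a', b) ∈ f n → a = a' := by
    intro a a' b m n hm hn
    have h1 : (a, b) ∈ f (max m n) := mono m _ (le_max_left _ _) _ hm
    have h2 : (a', b) ∈ f (max m n) := mono n _ (le_max_right _ _) _ hn
    exact ((inv (max m n)).1.2 (a, b) h1 (a', b) h2).2 rfl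
  have htot : ∀ a : ℕ, ∃ b n, (a, b) ∈ f n := by
    intro a
    obtain ⟨b, hb⟩ := (inv a).2.2.2.1
    exact ⟨b, a + 1, hb⟩
  classical
  let g : ℕ → ℕ := fun a => Classical.choose (htot a)
  have hg : ∀ a, ∃ n, (a, g a) ∈ f n := fun a => Classical.choose_spec (htot a)
  have hgval : ∀ a b n, (a, b) ∈ f n → g a = b := by
    intro a b n hn
    obtain ⟨m, hm⟩ := hg a
    exact muniq a (g a) b m n hm hn
  have hbij : Function.Bijective g := by
    constructor
    · intro a a' hh
      obtain ⟨m, hm⟩ := hg a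
      obtain ⟨n, hn⟩ := hg a'
      rw [hh] at hm
      exact muniq' a a' (g a') m n hm hn
    · intro b
      obtain ⟨a, ha⟩ := (inv b).2.2.2.2
      exact ⟨a, hgval a b (b + 1) ha⟩
  refine ⟨g, hbij, ?_, ?_⟩
  · intro p hp
    exact hgval p.1 p.2 0 hp
  · refine hG g hbij (fun p hp => hgval p.1 p.2 0 hp) fun n => ?_
    obtain ⟨w, hw, hsub⟩ := (inv n).2.2.1
    exact ⟨w, hw, fun p hp => hgval p.1 p.2 (n + 1) (hsub p hp)⟩

theorem nonmeager_of_comeager {u v : Cond} {A : Set (ℕ → ℕ)} (hv : CInj v)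
    (hsub : CSub u v) (h : ComeagerIn v A) : NonmeagerIn u A := by
  intro hc
  have := comeager_inter h (comeager_sub hsub hc)
  obtain ⟨g, _, _, hg⟩ := generic_exists hv this
  exact absurd hg.1 hg.2

theorem nonmeager_mono_cond {u v : Cond} {A : Set (ℕ → ℕ)} (hsub : CSub u v)
    (h : NonmeagerIn v A) : NonmeagerIn u A := fun hc => h (comeager_sub hsub hc)

theorem nonmeager_mono_bij {u : Cond} {A B : Set (ℕ → ℕ)}
    (hAB : ∀ g : ℕ → ℕ, Function.Bijective g → g ∈ A → g ∈ B)
    (h : NonmeagerIn u A) : NonmeagerIn u B := by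
  intro hc
  exact h (comeager_mono_bij (fun g hb (hg : g ∈ Bᶜ) => fun hgA : g ∈ A => hg (hAB g hb hgA)) hc)

theorem nonmeager_iUnion {u : Cond} {A : ℕ → Set (ℕ → ℕ)}
    (h : NonmeagerIn u (⋃ n, A n)) : ∃ n, NonmeagerIn u (A n) := by
  by_contra hno
  push_neg at hno
  refine h (comeager_mono_bij (fun g _ hg => ?_)
    (comeager_iInter fun n => not_not.1 (hno n)))
  intro hmem
  rcases Set.mem_iUnion.1 hmem with ⟨n, hn⟩
  exact (Set.mem_iInter.1 hg n) hn
/-! ### Open sets and the Baire property -/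

/-- Open subsets of the space of bijections. -/
def OpenB (O : Set (ℕ → ℕ)) : Prop :=
  ∀ g : ℕ → ℕ, Function.Bijective g → g ∈ O →
    ∃ v, CInj v ∧ CExt v g ∧ ∀ h : ℕ → ℕ, Function.Bijective h → CExt v h → h ∈ O

/-- The Baire property (relative to the bijection space). -/
def BPB (A : Set (ℕ → ℕ)) : Prop :=
  ∃ O, OpenB O ∧ ComeagerIn [] {g | g ∈ A ↔ g ∈ O}

theorem BPB_open {O : Set (ℕ → ℕ)} (h : OpenB O) : BPB O :=
  ⟨O, h, comeagerIn_of_all fun _ _ _ => Iff.rfl⟩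

theorem openB_iUnion {O : ℕ → Set (ℕ → ℕ)} (h : ∀ n, OpenB (O n)) : OpenB (⋃ n, O n) := by
  intro g hb hg
  rcases Set.mem_iUnion.1 hg with ⟨n, hn⟩
  obtain ⟨v, h1, h2, h3⟩ := h n g hb hn
  exact ⟨v, h1, h2, fun k hk he => Set.mem_iUnion.2 ⟨n, h3 k hk he⟩⟩

theorem BPB_iUnion {A : ℕ → Set (ℕ → ℕ)} (h : ∀ n, BPB (A n)) : BPB (⋃ n, A n) := by
  choose O hO hA using h
  refine ⟨⋃ n, O n, openB_iUnion hO, ?_⟩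
  refine comeager_mono_bij (fun g hb hg => ?_) (comeager_iInter hA)
  have := Set.mem_iInter.1 hg
  show (g ∈ ⋃ n, A n) ↔ (g ∈ ⋃ n, O n)
  simp only [Set.mem_iUnion]
  exact exists_congr fun n => this n

/-- Key density fact: below any injective condition, either some extension
forces `O` or some extension forces `Oᶜ`. -/
theorem open_decided {O : Set (ℕ → ℕ)} (hO : OpenB O) (v : Cond) (hv : CInj v) :
    (∃ w, CSub v w ∧ CInj w ∧ ∀ h : ℕ → ℕ, Function.Bijective h → CExt w h → h ∈ O) ∨
    (∃ w, CSub v w ∧ CInj w ∧ ∀ h : ℕ → ℕ, Function.Bijective h → CExt w h → h ∉ O) := by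
  by_cases hc : ∃ h : ℕ → ℕ, Function.Bijective h ∧ CExt v h ∧ h ∈ O
  · obtain ⟨h, hb, he, hmem⟩ := hc
    obtain ⟨v', h1, h2, h3⟩ := hO h hb hmem
    refine Or.inl ⟨v ++ v', CSub.append_left _ _, ?_, ?_⟩
    · refine cinj_of_ext hb.injective fun p hp => ?_
      rcases List.mem_append.1 hp with hp' | hp'
      · exact he p hp'
      · exact h2 p hp'
    · intro k hk hke
      exact h3 k hk (CExt.mono (CSub.append_right _ _) hke)
  · push_neg at hc
    exact Or.inr ⟨v, CSub.refl v, hv, fun k hk hke => hc k hk hke⟩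

theorem BPB_compl {A : Set (ℕ → ℕ)} (h : BPB A) : BPB Aᶜ := by
  obtain ⟨O, hO, hagree⟩ := h
  refine ⟨{g | ∃ v, CInj v ∧ CExt v g ∧
    ∀ h : ℕ → ℕ, Function.Bijective h → CExt v h → h ∉ O}, ?_, ?_⟩
  · intro g _ hg
    obtain ⟨v, h1, h2, h3⟩ := hg
    exact ⟨v, h1, h2, fun k hk he => ⟨v, h1, he, h3⟩⟩
  · -- the set of g which are decided is comeager
    have hdec : ComeagerIn [] {g | (∀ h : ℕ → ℕ, Function.Bijective h → h = g → h ∈ O) ∨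
        (∃ v, CInj v ∧ CExt v g ∧ ∀ h : ℕ → ℕ, Function.Bijective h → CExt v h → h ∉ O)} := by
      refine ⟨fun _ w => CInj w ∧ ((∀ h : ℕ → ℕ, Function.Bijective h → CExt w h → h ∈ O) ∨
        (∀ h : ℕ → ℕ, Function.Bijective h → CExt w h → h ∉ O)), ?_, ?_⟩
      · intro n v _ hvi
        rcases open_decided hO v hvi with ⟨w, h1, h2, h3⟩ | ⟨w, h1, h2, h3⟩
        · exact ⟨w, h1, h2, h2, Or.inl h3⟩
        · exact ⟨w, h1, h2, h2, Or.inr h3⟩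
      · intro g hb _ hm
        obtain ⟨w, ⟨hwi, hw⟩, hwe⟩ := hm 0
        rcases hw with hw | hw
        · exact Or.inl fun k hk hkg => hkg ▸ hw g hb hwe
        · exact Or.inr ⟨w, hwi, hwe, hw⟩
    refine comeager_mono_bij (fun g hb hg => ?_) (comeager_inter hagree hdec)
    obtain ⟨hag, hdc⟩ := hg
    rcases hdc with hdc | hdc
    · constructor
      · intro hgAc
        exact absurd ((hag : g ∈ A ↔ g ∈ O).2 (hdc g hb rfl)) hgAc
      · rintro ⟨v, h1, h2, h3⟩
        exact absurd (hdc g hb rfl) (h3 g hb h2)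
    · constructor
      · intro _; exact hdc
      · rintro ⟨v, h1, h2, h3⟩
        exact fun hgA => h3 g hb h2 ((hag : g ∈ A ↔ g ∈ O).1 hgA)

theorem BPB_inter {A B : Set (ℕ → ℕ)} (hA : BPB A) (hB : BPB B) : BPB (A ∩ B) := by
  have : A ∩ B = (Aᶜ ∪ Bᶜ)ᶜ := by
    rw [Set.compl_union, compl_compl, compl_compl]
  rw [this]
  apply BPB_compl
  have hU : BPB (⋃ n : ℕ, if n = 0 then Aᶜ else Bᶜ) := by
    refine BPB_iUnion fun n => ?_
    by_cases hn : n = 0 <;> simp [hn, BPB_compl hA, BPB_compl hB]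
  have : (⋃ n : ℕ, if n = 0 then Aᶜ else Bᶜ) = Aᶜ ∪ Bᶜ := by
    ext g
    simp only [Set.mem_iUnion, Set.mem_union]
    constructor
    · rintro ⟨n, hn⟩
      by_cases h : n = 0
      · rw [if_pos h] at hn; exact Or.inl hn
      · rw [if_neg h] at hn; exact Or.inr hn
    · rintro (hg | hg)
      · exact ⟨0, by simp [hg]⟩
      · exact ⟨1, by simp [hg]⟩
  rwa [this] at hU

theorem BPB_diff {A B : Set (ℕ → ℕ)} (hA : BPB A) (hB : BPB B) : BPB (A \ B) :=
  BPB_inter hA (BPB_compl hB)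

/-- Localization: a nonmeager set with the Baire property is comeager below
some stronger condition. -/
theorem localize {A : Set (ℕ → ℕ)} {u : Cond} (hBP : BPB A) (hu : CInj u)
    (hnm : NonmeagerIn u A) : ∃ v, CInj v ∧ CSub u v ∧ ComeagerIn v A := by
  obtain ⟨O, hO, hagree⟩ := hBP
  by_cases hcase : ∃ v, CInj v ∧ CSub u v ∧
      ∀ h : ℕ → ℕ, Function.Bijective h → CExt v h → h ∈ O
  · obtain ⟨v, hvi, hvs, hvO⟩ := hcase
    refine ⟨v, hvi, hvs, ?_⟩
    have h1 : ComeagerIn v O := comeagerIn_of_all hvO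
    have h2 : ComeagerIn v {g | g ∈ A ↔ g ∈ O} := comeager_sub (CSub.nil v) hagree
    refine comeager_mono_bij (fun g _ hg => ?_) (comeager_inter h1 h2)
    exact (hg.2 : g ∈ A ↔ g ∈ O).2 hg.1
  · exfalso
    apply hnm
    have hOc : ComeagerIn u Oᶜ := by
      refine ⟨fun _ w => CInj w ∧ ∀ h : ℕ → ℕ, Function.Bijective h → CExt w h → h ∉ O, ?_, ?_⟩
      · intro n v hvs hvi
        rcases open_decided hO v hvi with ⟨w, h1, h2, h3⟩ | ⟨w, h1, h2, h3⟩
        · exact absurd ⟨w, h2, hvs.trans h1, h3⟩ hcase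
        · exact ⟨w, h1, h2, h2, h3⟩
      · intro g hb _ hm
        obtain ⟨w, ⟨_, hw⟩, hwe⟩ := hm 0
        exact hw g hb hwe
    have h2 : ComeagerIn u {g | g ∈ A ↔ g ∈ O} := comeager_sub (CSub.nil u) hagree
    refine comeager_mono_bij (fun g _ hg => ?_) (comeager_inter hOc h2)
    exact fun hgA => hg.1 ((hg.2 : g ∈ A ↔ g ∈ O).1 hgA)
/-! ### The action of bijections on structures; the Scott basis -/

def act (g : ℕ → ℕ) (S : ℕ → List ℕ → Prop) : ℕ → List ℕ → Prop :=
  fun r l => S r (l.map g)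

theorem map_eq_two {g : ℕ → ℕ} {l : List ℕ} {a b : ℕ} :
    l.map g = [a, b] ↔ ∃ x y, l = [x, y] ∧ g x = a ∧ g y = b := by
  cases l with
  | nil => simp
  | cons x t =>
    cases t with
    | nil => simp
    | cons y t' =>
      cases t' with
      | nil =>
        constructor
        · intro h
          simp only [List.map_cons, List.map_nil, List.cons.injEq, and_true] at h
          exact ⟨x, y, rfl, h.1, h.2⟩
        · rintro ⟨x', y', hl, rfl, rfl⟩
          rw [hl]; simp
      | cons z t'' => simp

theorem isStr_act {S : ℕ → List ℕ → Prop} (hS : IsStr S) {g : ℕ → ℕ}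
    (hg : Function.Bijective g) : IsStr (act g S) := by
  constructor
  · intro l
    show S 0 (l.map g) ↔ _
    rw [hS.1]
    constructor
    · rintro ⟨a, ha⟩
      rcases map_eq_two.1 ha with ⟨x, y, rfl, hx, hy⟩
      have : x = y := hg.1 (by rw [hx, hy])
      exact ⟨x, by rw [this]⟩
    · rintro ⟨a, rfl⟩
      exact ⟨g a, rfl⟩
  · intro l
    show S 1 (l.map g) ↔ _
    rw [hS.2]
    constructor
    · rintro ⟨a, b, hab, ha⟩
      rcases map_eq_two.1 ha with ⟨x, y, rfl, hx, hy⟩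
      exact ⟨x, y, fun h => hab (by rw [← hx, ← hy, h]), rfl⟩
    · rintro ⟨a, b, hab, rfl⟩
      exact ⟨g a, g b, fun h => hab (hg.1 h), rfl⟩

def actM (g : ℕ → ℕ) (hg : Function.Bijective g) (S : MStr) : MStr :=
  ⟨act g S.1, isStr_act S.2 hg⟩

/-- The set of bijections moving `S` into `Z`. -/
def GSet (Z : Set MStr) (S : MStr) : Set (ℕ → ℕ) :=
  {g | ∃ hg : Function.Bijective g, actM g hg S ∈ Z}

theorem GSet_iUnion {Z : ℕ → Set MStr} {S : MStr} :
    GSet (⋃ i, Z i) S = ⋃ i, GSet (Z i) S := by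
  ext g
  simp only [GSet, Set.mem_iUnion, Set.mem_setOf_eq]
  tauto

theorem GSet_diff {Z Z' : Set MStr} {S : MStr} :
    GSet (Z \ Z') S = GSet Z S \ GSet Z' S := by
  ext g
  simp only [GSet, Set.mem_diff, Set.mem_setOf_eq]
  constructor
  · rintro ⟨hg, h1, h2⟩
    exact ⟨⟨hg, h1⟩, fun ⟨hg', h'⟩ => h2 h'⟩
  · rintro ⟨⟨hg, h1⟩, h2⟩
    exact ⟨hg, h1, fun h' => h2 ⟨hg, h'⟩⟩

/-- Basic Scott-open sets. -/
def UpSet (F : List (ℕ × List ℕ)) : Set MStr := {T | ∀ p ∈ F, T.1 p.1 p.2}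

def strFin (F : List (ℕ × List ℕ)) : ℕ → List ℕ → Prop :=
  fun r l => (r = 0 ∧ ∃ a, l = [a, a]) ∨ (r = 1 ∧ ∃ a b, a ≠ b ∧ l = [a, b]) ∨ (r, l) ∈ F

theorem isStr_strFin {S : MStr} {F : List (ℕ × List ℕ)} (hF : ∀ p ∈ F, S.1 p.1 p.2) :
    IsStr (strFin F) := by
  constructor
  · intro l
    constructor
    · rintro (⟨-, h⟩ | ⟨h01, -⟩ | h)
      · exact h
      · exact absurd h01 (by norm_num)
      · exact (S.2.1 l).1 (hF (0, l) h)
    · intro h; exact Or.inl ⟨rfl, h⟩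
  · intro l
    constructor
    · rintro (⟨h10, -⟩ | ⟨-, h⟩ | h)
      · exact absurd h10 (by norm_num)
      · exact h
      · exact (S.2.2 l).1 (hF (1, l) h)
    · intro h; exact Or.inr (Or.inl ⟨rfl, h⟩)

/-- Every Scott-open set is a union of basic open sets. -/
theorem scottOpen_basis {U : Set MStr} (hU : ScottOpenM U) (S : MStr) :
    S ∈ U ↔ ∃ F, S ∈ UpSet F ∧ UpSet F ⊆ U := by
  constructor
  · intro hSU
    set D : Set MStr := {T | ∃ F : List (ℕ × List ℕ), (∀ p ∈ F, S.1 p.1 p.2) ∧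
      T.1 = strFin F} with hD
    have hne : D.Nonempty :=
      ⟨⟨strFin [], isStr_strFin (S := S) (fun p hp => absurd hp List.not_mem_nil)⟩,
        ⟨[], fun p hp => absurd hp List.not_mem_nil, rfl⟩⟩
    have hdir : DirectedOn SleM D := by
      rintro T1 ⟨F1, hF1, hT1⟩ T2 ⟨F2, hF2, hT2⟩
      have hFF : ∀ p ∈ F1 ++ F2, S.1 p.1 p.2 := by
        intro p hp
        rcases List.mem_append.1 hp with h | h
        · exact hF1 p h
        · exact hF2 p h
      refine ⟨⟨strFin (F1 ++ F2), isStr_strFin hFF⟩, ⟨F1 ++ F2, hFF, rfl⟩, ?_, ?_⟩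
      · intro r l hl
        rw [hT1] at hl
        rcases hl with h | h | h
        · exact Or.inl h
        · exact Or.inr (Or.inl h)
        · exact Or.inr (Or.inr (List.mem_append.2 (Or.inl h)))
      · intro r l hl
        rw [hT2] at hl
        rcases hl with h | h | h
        · exact Or.inl h
        · exact Or.inr (Or.inl h)
        · exact Or.inr (Or.inr (List.mem_append.2 (Or.inr h)))
    have hub : ∀ T ∈ D, SleM T S := by
      rintro T ⟨F, hF, hT⟩ r l hl
      rw [hT] at hl
      rcases hl with ⟨rfl, h⟩ | ⟨rfl, h⟩ | h
      · exact (S.2.1 l).2 h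
      · exact (S.2.2 l).2 h
      · exact hF (r, l) h
    have hlub : ∀ T', (∀ T ∈ D, SleM T T') → SleM S T' := by
      intro T' hT' r l hl
      have hmem : (⟨strFin [(r, l)], isStr_strFin (by simpa using hl)⟩ : MStr) ∈ D :=
        ⟨[(r, l)], by simpa using hl, rfl⟩
      exact hT' _ hmem r l (Or.inr (Or.inr (List.mem_singleton.2 rfl)))
    obtain ⟨T, hTD, hTU⟩ := hU.2 D hne hdir S hub hlub hSU
    obtain ⟨F, hF, hTeq⟩ := hTD
    refine ⟨F, hF, ?_⟩
    intro T' hT'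
    refine hU.1 T T' hTU ?_
    intro r l hl
    rw [hTeq] at hl
    rcases hl with ⟨rfl, h⟩ | ⟨rfl, h⟩ | h
    · exact (T'.2.1 l).2 h
    · exact (T'.2.2 l).2 h
    · exact hT' (r, l) h
  · rintro ⟨F, h1, h2⟩
    exact h2 h1

theorem actM_mem_upSet {g : ℕ → ℕ} {hg : Function.Bijective g} {S : MStr}
    {F : List (ℕ × List ℕ)} :
    actM g hg S ∈ UpSet F ↔ TSat S.1 g (.fconj F) := Iff.rfl

/-- G-sets of Scott-open sets are open in the bijection space. -/
theorem openB_GSet {U : Set MStr} (hU : ScottOpenM U) (S : MStr) : OpenB (GSet U S) := by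
  rintro g hb ⟨hg, hmem⟩
  obtain ⟨F, hF1, hF2⟩ := (scottOpen_basis hU _).1 hmem
  refine ⟨((F.flatMap Prod.snd).dedup).map fun x => (x, g x), ?_, ?_, ?_⟩
  · refine cinj_of_ext hb.injective fun p hp => ?_
    rcases List.mem_map.1 hp with ⟨x, -, rfl⟩
    rfl
  · intro p hp
    rcases List.mem_map.1 hp with ⟨x, -, rfl⟩
    rfl
  · intro h hhb hhe
    refine ⟨hhb, hF2 ?_⟩
    rw [actM_mem_upSet]
    rw [actM_mem_upSet] at hF1
    rw [TSat_fconj_congr F fun p hp x hx => ?_]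
    · exact hF1
    · show h x = g x
      have hxmem : x ∈ (F.flatMap Prod.snd).dedup :=
        List.mem_dedup.2 (List.mem_flatMap.2 ⟨p, hp, hx⟩)
      exact hhe (x, g x) (List.mem_map.2 ⟨x, hxmem, rfl⟩)

theorem iso_actM (S : MStr) (g : ℕ → ℕ) (hg : Function.Bijective g) :
    Iso S.1 (actM g hg S).1 := by
  set e := Equiv.ofBijective g hg with he
  refine ⟨fun x => e.symm x, e.symm.bijective, fun r l => ?_⟩
  show S.1 r l ↔ S.1 r ((l.map _).map g)
  rw [List.map_map]
  have : (g ∘ fun x => e.symm x) = id := by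
    funext x
    show g (e.symm x) = x
    exact e.apply_symm_apply x
  rw [this, List.map_id]

theorem iso_symm {S T : ℕ → List ℕ → Prop} (h : Iso S T) : Iso T S := by
  obtain ⟨g, hg, hrl⟩ := h
  set e := Equiv.ofBijective g hg with he
  refine ⟨fun x => e.symm x, e.symm.bijective, fun r l => ?_⟩
  have := hrl r (l.map fun x => e.symm x)
  rw [List.map_map] at this
  have h2 : (g ∘ fun x => e.symm x) = id := by
    funext x; exact e.apply_symm_apply x
  rw [h2, List.map_id] at this
  exact this.symm
/-! ### Easy direction: definable sets lie in the Selivanov hierarchy -/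

theorem scottOpenM_iUnion {I : Type} {U : I → Set MStr} (h : ∀ i, ScottOpenM (U i)) :
    ScottOpenM (⋃ i, U i) := by
  constructor
  · intro S T hS hST
    rcases Set.mem_iUnion.1 hS with ⟨i, hi⟩
    exact Set.mem_iUnion.2 ⟨i, (h i).1 S T hi hST⟩
  · intro D hne hdir T hub hlub hT
    rcases Set.mem_iUnion.1 hT with ⟨i, hi⟩
    obtain ⟨S0, hS0D, hS0U⟩ := (h i).2 D hne hdir T hub hlub hi
    exact ⟨S0, hS0D, Set.mem_iUnion.2 ⟨i, hS0U⟩⟩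

/-- Scott openness of finite positive conjunctions of atoms. -/
theorem scottOpen_fconjSet (F : List (ℕ × List ℕ)) :
    ScottOpenM {S : MStr | ∀ p ∈ F, S.1 p.1 p.2} := by
  constructor
  · intro S T hS hST p hp
    exact hST p.1 p.2 (hS p hp)
  · intro D hne hdir T hub hlub hT
    -- every atom of T is an atom of some member of D or a forced atom
    have key : ∀ r l, T.1 r l →
        ((r = 0 ∧ ∃ a, l = [a, a]) ∨ (r = 1 ∧ ∃ a b, a ≠ b ∧ l = [a, b])) ∨
        ∃ S ∈ D, S.1 r l := by
      intro r l hl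
      have hT' : IsStr (fun r l => ((r = 0 ∧ ∃ a, l = [a, a]) ∨
          (r = 1 ∧ ∃ a b, a ≠ b ∧ l = [a, b])) ∨ ∃ S ∈ D, S.1 r l) := by
        constructor
        · intro l'
          constructor
          · rintro ((⟨-, h⟩ | ⟨h01, -⟩) | ⟨S, -, hS⟩)
            · exact h
            · exact absurd h01 (by norm_num)
            · exact (S.2.1 l').1 hS
          · intro h; exact Or.inl (Or.inl ⟨rfl, h⟩)
        · intro l'
          constructor
          · rintro ((⟨h10, -⟩ | ⟨-, h⟩) | ⟨S, -, hS⟩)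
            · exact absurd h10 (by norm_num)
            · exact h
            · exact (S.2.2 l').1 hS
          · intro h; exact Or.inl (Or.inr ⟨rfl, h⟩)
      have hub' : ∀ S ∈ D, SleM S ⟨_, hT'⟩ := by
        intro S hS r' l' hl'
        exact Or.inr ⟨S, hS, hl'⟩
      exact hlub ⟨_, hT'⟩ hub' r l hl
    -- find a common member of D satisfying all atoms in F
    have main : ∀ F' : List (ℕ × List ℕ), (∀ p ∈ F', T.1 p.1 p.2) →
        ∃ S ∈ D, ∀ p ∈ F', S.1 p.1 p.2 := by
      intro F'
      induction F' with
      | nil =>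
        intro _
        obtain ⟨S0, hS0⟩ := hne
        exact ⟨S0, hS0, fun p hp => absurd hp List.not_mem_nil⟩
      | cons p F' ih =>
        intro hall
        obtain ⟨S1, hS1D, hS1⟩ := ih fun q hq => hall q (List.mem_cons_of_mem _ hq)
        rcases key p.1 p.2 (hall p (List.mem_cons_self)) with hbase | ⟨S2, hS2D, hS2⟩
        · refine ⟨S1, hS1D, fun q hq => ?_⟩
          rcases List.mem_cons.1 hq with rfl | hq'
          · rcases hbase with ⟨h0, a, ha⟩ | ⟨h1, a, b, hab, hab'⟩
            · rw [h0, ha]; exact (S1.2.1 _).2 ⟨a, rfl⟩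
            · rw [h1, hab']; exact (S1.2.2 _).2 ⟨a, b, hab, rfl⟩
          · exact hS1 q hq'
        · obtain ⟨S3, hS3D, h31, h32⟩ := hdir S1 hS1D S2 hS2D
          refine ⟨S3, hS3D, fun q hq => ?_⟩
          rcases List.mem_cons.1 hq with rfl | hq'
          · exact h32 q.1 q.2 hS2
          · exact h31 q.1 q.2 (hS1 q hq')
    obtain ⟨S0, hS0D, hS0⟩ := main F hT
    exact ⟨S0, ⟨hS0D, hS0⟩⟩

theorem scottOpen_empty : ScottOpenM (∅ : Set MStr) := by
  constructor
  · intro S T hS; exact absurd hS (Set.notMem_empty S)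
  · intro D hne hdir T hub hlub hT; exact absurd hT (Set.notMem_empty T)

theorem scottOpen_univ : ScottOpenM (Set.univ : Set MStr) := by
  constructor
  · intro S T _ _; trivial
  · intro D hne hdir T hub hlub hT
    obtain ⟨S0, hS0⟩ := hne
    exact ⟨S0, hS0, trivial⟩

theorem sigma0_scott' {β : Ordinal} {φ : TForm} (h : TSigma β φ) (hβ0 : β = 0) (s : ℕ → ℕ) :
    ScottOpenM {S : MStr | TSat S.1 s φ} := by
  cases h with
  | one xs ψ hψ => exact absurd hβ0 one_ne_zero
  | ge2a α' βf xs φ' ψ h2 hβ h1' h2' => rw [hβ0] at h2; exact absurd h2 (by norm_num)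
  | ge2b α' βf xs φ' ψ h2 hβ h1' h2' => rw [hβ0] at h2; exact absurd h2 (by norm_num)
  | verum =>
    have : {S : MStr | TSat S.1 s .verum} = Set.univ := by
      ext S; simp [TSat]
    rw [this]; exact scottOpen_univ
  | falsum =>
    have : {S : MStr | TSat S.1 s .falsum} = ∅ := by
      ext S; simp [TSat]
    rw [this]; exact scottOpen_empty
  | rel r v =>
    have : {S : MStr | TSat S.1 s (.rel r v)} = {S : MStr | ∀ p ∈ [(r, v.map s)], S.1 p.1 p.2} := by
      ext S; simp [TSat]
    rw [this]; exact scottOpen_fconjSet _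
  | fconj l =>
    have : {S : MStr | TSat S.1 s (.fconj l)} =
        {S : MStr | ∀ p ∈ l.map (fun p => (p.1, p.2.map s)), S.1 p.1 p.2} := by
      ext S
      show (∀ p ∈ l, _) ↔ _
      constructor
      · rintro h p hp
        rcases List.mem_map.1 hp with ⟨q, hq, rfl⟩
        exact h q hq
      · intro h p hp
        exact h (p.1, p.2.map s) (List.mem_map.2 ⟨p, hp, rfl⟩)
    rw [this]; exact scottOpen_fconjSet _

theorem pi0_scott' {β : Ordinal} {φ : TForm} (h : TPi β φ) (hβ0 : β = 0) (s : ℕ → ℕ) :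
    ScottOpenM {S : MStr | ¬ TSat S.1 s φ} := by
  cases h with
  | one xs ψ hψ => exact absurd hβ0 one_ne_zero
  | ge2a α' βf xs φ' ψ h2 hβ h1' h2' => rw [hβ0] at h2; exact absurd h2 (by norm_num)
  | ge2b α' βf xs φ' ψ h2 hβ h1' h2' => rw [hβ0] at h2; exact absurd h2 (by norm_num)
  | verum =>
    have : {S : MStr | ¬ TSat S.1 s .verum} = ∅ := by
      ext S; simp [TSat]
    rw [this]; exact scottOpen_empty
  | falsum =>
    have : {S : MStr | ¬ TSat S.1 s .falsum} = Set.univ := by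
      ext S; simp [TSat]
    rw [this]; exact scottOpen_univ
  | nrel r v =>
    have : {S : MStr | ¬ TSat S.1 s (.nrel r v)} =
        {S : MStr | ∀ p ∈ [(r, v.map s)], S.1 p.1 p.2} := by
      ext S; simp [TSat]
    rw [this]; exact scottOpen_fconjSet _
  | fdisj l =>
    have : {S : MStr | ¬ TSat S.1 s (.fdisj l)} =
        {S : MStr | ∀ p ∈ l.map (fun p => (p.1, p.2.map s)), S.1 p.1 p.2} := by
      ext S
      show (¬ ∃ p ∈ l, _) ↔ _
      push_neg
      constructor
      · rintro h p hp
        rcases List.mem_map.1 hp with ⟨q, hq, rfl⟩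
        exact h q hq
      · intro h p hp
        exact h (p.1, p.2.map s) (List.mem_map.2 ⟨p, hp, rfl⟩)
    rw [this]; exact scottOpen_fconjSet _

theorem max_one_lt {α β : Ordinal} (h : β < α) (h1 : 1 < α) : max 1 β < α := max_lt h1 h

theorem easy_direction : ∀ α : Ordinal.{u}, ∀ φ : TForm,
    (TSigma α φ → ∀ s, SelSigmaM (max 1 α) {S : MStr | TSat S.1 s φ}) ∧
    (TPi α φ → ∀ s, SelSigmaM (max 1 α) {S : MStr | ¬ TSat S.1 s φ}) := by
  intro α
  induction α using WellFoundedLT.induction with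
  | ind α ih =>
    intro φ
    constructor
    · intro h s
      cases h with
      | verum =>
        rw [show max (1 : Ordinal) 0 = 1 from max_eq_left (zero_le (a := 1))]
        exact SelSigmaM.base _ (sigma0_scott' TSigma.verum.{u} rfl s)
      | falsum =>
        rw [show max (1 : Ordinal) 0 = 1 from max_eq_left (zero_le (a := 1))]
        exact SelSigmaM.base _ (sigma0_scott' TSigma.falsum.{u} rfl s)
      | rel r v =>
        rw [show max (1 : Ordinal) 0 = 1 from max_eq_left (zero_le (a := 1))]
        exact SelSigmaM.base _ (sigma0_scott' (TSigma.rel.{u} r v) rfl s)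
      | fconj l =>
        rw [show max (1 : Ordinal) 0 = 1 from max_eq_left (zero_le (a := 1))]
        exact SelSigmaM.base _ (sigma0_scott' (TSigma.fconj.{u} l) rfl s)
      | one xs ψ hψ =>
        have : {S : MStr | TSat S.1 s (.disj fun i => exIter (xs i) (ψ i))} =
            ⋃ q : ℕ × List ℕ, {S : MStr | TSat S.1 (updList s (xs q.1) q.2) (ψ q.1)} := by
          ext S
          show (∃ i, TSat _ _ _) ↔ _
          simp only [Set.mem_iUnion, Set.mem_setOf_eq]
          constructor
          · rintro ⟨i, hi⟩
            rcases TSat_exIter _ _ _ |>.1 hi with ⟨l, hl⟩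
            exact ⟨(i, l), hl⟩
          · rintro ⟨⟨i, l⟩, hl⟩
            exact ⟨i, TSat_exIter _ _ _ |>.2 ⟨l, hl⟩⟩
        rw [this]
        have hmax : max (1 : Ordinal) 1 = 1 := by simp
        rw [hmax]
        exact SelSigmaM.base _ (scottOpenM_iUnion fun q => sigma0_scott' (hψ q.1) rfl _)
      | ge2a α' β xs φ' ψ h2 hβ h1' h2' =>
        have hmax : max (1 : Ordinal) α = α := max_eq_right (le_trans (by norm_num) h2)
        rw [hmax]
        have h1α : 1 < α := two_le_iff.1 h2
        have heq : {S : MStr | TSat S.1 s (.disj fun i => exIter (xs i) (.cand (φ' i) (ψ i)))} =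
            ⋃ j : ℕ, ({S : MStr | TSat S.1
                (updList s (xs j.unpair.1) (Denumerable.ofNat (List ℕ) j.unpair.2)) (φ' j.unpair.1)} \
              {S : MStr | ¬ TSat S.1
                (updList s (xs j.unpair.1) (Denumerable.ofNat (List ℕ) j.unpair.2)) (ψ j.unpair.1)}) := by
          ext S
          show (∃ i, TSat _ _ _) ↔ _
          simp only [Set.mem_iUnion, Set.mem_diff, Set.mem_setOf_eq, not_not]
          constructor
          · rintro ⟨i, hi⟩
            rcases TSat_exIter _ _ _ |>.1 hi with ⟨l, hl⟩
            refine ⟨Nat.pair i (Encodable.encode l), ?_⟩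
            simp only [Nat.unpair_pair, Denumerable.ofNat_encode]
            exact hl
          · rintro ⟨j, hl⟩
            exact ⟨j.unpair.1, TSat_exIter _ _ _ |>.2 ⟨_, hl⟩⟩
        rw [heq]
        refine SelSigmaM.step α (fun j => max 1 (β j.unpair.1)) _ _ h1α
          (fun j => max_one_lt (hβ j.unpair.1) h1α) (fun j => ?_) (fun j => ?_)
        · exact (ih (β j.unpair.1) (hβ j.unpair.1) (φ' j.unpair.1)).1 (h1' j.unpair.1) _
        · exact (ih (β j.unpair.1) (hβ j.unpair.1) (ψ j.unpair.1)).2 (h2' j.unpair.1) _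
      | ge2b α' β xs φ' ψ h2 hβ h1' h2' =>
        have hmax : max (1 : Ordinal) α = α := max_eq_right (le_trans (by norm_num) h2)
        rw [hmax]
        have h1α : 1 < α := two_le_iff.1 h2
        have heq : {S : MStr | TSat S.1 s (.disj fun i => exIter (xs i) (.cand (φ' i) (ψ i)))} =
            ⋃ j : ℕ, ({S : MStr | TSat S.1
                (updList s (xs j.unpair.1) (Denumerable.ofNat (List ℕ) j.unpair.2)) (ψ j.unpair.1)} \
              {S : MStr | ¬ TSat S.1
                (updList s (xs j.unpair.1) (Denumerable.ofNat (List ℕ) j.unpair.2)) (φ' j.unpair.1)}) := by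
          ext S
          show (∃ i, TSat _ _ _) ↔ _
          simp only [Set.mem_iUnion, Set.mem_diff, Set.mem_setOf_eq, not_not]
          constructor
          · rintro ⟨i, hi⟩
            rcases TSat_exIter _ _ _ |>.1 hi with ⟨l, hl⟩
            refine ⟨Nat.pair i (Encodable.encode l), ?_⟩
            simp only [Nat.unpair_pair, Denumerable.ofNat_encode]
            exact ⟨hl.2, hl.1⟩
          · rintro ⟨j, hl⟩
            exact ⟨j.unpair.1, TSat_exIter _ _ _ |>.2 ⟨_, ⟨hl.2, hl.1⟩⟩⟩
        rw [heq]
        refine SelSigmaM.step α (fun j => max 1 (β j.unpair.1)) _ _ h1α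
          (fun j => max_one_lt (hβ j.unpair.1) h1α) (fun j => ?_) (fun j => ?_)
        · exact (ih (β j.unpair.1) (hβ j.unpair.1) (ψ j.unpair.1)).1 (h2' j.unpair.1) _
        · exact (ih (β j.unpair.1) (hβ j.unpair.1) (φ' j.unpair.1)).2 (h1' j.unpair.1) _
    · intro h s
      cases h with
      | verum =>
        rw [show max (1 : Ordinal) 0 = 1 from max_eq_left (zero_le (a := 1))]
        exact SelSigmaM.base _ (pi0_scott' TPi.verum.{u} rfl s)
      | falsum =>
        rw [show max (1 : Ordinal) 0 = 1 from max_eq_left (zero_le (a := 1))]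
        exact SelSigmaM.base _ (pi0_scott' TPi.falsum.{u} rfl s)
      | nrel r v =>
        rw [show max (1 : Ordinal) 0 = 1 from max_eq_left (zero_le (a := 1))]
        exact SelSigmaM.base _ (pi0_scott' (TPi.nrel.{u} r v) rfl s)
      | fdisj l =>
        rw [show max (1 : Ordinal) 0 = 1 from max_eq_left (zero_le (a := 1))]
        exact SelSigmaM.base _ (pi0_scott' (TPi.fdisj.{u} l) rfl s)
      | one xs ψ hψ =>
        have : {S : MStr | ¬ TSat S.1 s (.conj fun i => allIter (xs i) (ψ i))} =
            ⋃ q : ℕ × List ℕ, {S : MStr | ¬ TSat S.1 (updList s (xs q.1) q.2) (ψ q.1)} := by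
          ext S
          show (¬ ∀ i, TSat _ _ _) ↔ _
          push_neg
          simp only [Set.mem_iUnion, Set.mem_setOf_eq]
          constructor
          · rintro ⟨i, hi⟩
            rw [TSat_allIter] at hi
            push_neg at hi
            obtain ⟨l, hl⟩ := hi
            exact ⟨(i, l), hl⟩
          · rintro ⟨⟨i, l⟩, hl⟩
            refine ⟨i, ?_⟩
            rw [TSat_allIter]
            push_neg
            exact ⟨l, hl⟩
        rw [this]
        have hmax : max (1 : Ordinal) 1 = 1 := by simp
        rw [hmax]
        exact SelSigmaM.base _ (scottOpenM_iUnion fun q => pi0_scott' (hψ q.1) rfl _)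
      | ge2a α' β xs φ' ψ h2 hβ h1' h2' =>
        have hmax : max (1 : Ordinal) α = α := max_eq_right (le_trans (by norm_num) h2)
        rw [hmax]
        have h1α : 1 < α := two_le_iff.1 h2
        have heq : {S : MStr | ¬ TSat S.1 s (.conj fun i => allIter (xs i) (.cor (φ' i) (ψ i)))} =
            ⋃ j : ℕ, ({S : MStr | ¬ TSat S.1
                (updList s (xs j.unpair.1) (Denumerable.ofNat (List ℕ) j.unpair.2)) (ψ j.unpair.1)} \
              {S : MStr | TSat S.1
                (updList s (xs j.unpair.1) (Denumerable.ofNat (List ℕ) j.unpair.2)) (φ' j.unpair.1)}) := by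
          ext S
          show (¬ ∀ i, TSat _ _ _) ↔ _
          push_neg
          simp only [Set.mem_iUnion, Set.mem_diff, Set.mem_setOf_eq]
          constructor
          · rintro ⟨i, hi⟩
            rw [TSat_allIter] at hi
            push_neg at hi
            obtain ⟨l, hl⟩ := hi
            have hl' : ¬ (TSat S.1 (updList s (xs i) l) (φ' i) ∨
                TSat S.1 (updList s (xs i) l) (ψ i)) := hl
            push_neg at hl'
            refine ⟨Nat.pair i (Encodable.encode l), ?_⟩
            simp only [Nat.unpair_pair, Denumerable.ofNat_encode]
            exact ⟨hl'.2, hl'.1⟩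
          · rintro ⟨j, hl⟩
            refine ⟨j.unpair.1, ?_⟩
            rw [TSat_allIter]
            push_neg
            refine ⟨Denumerable.ofNat (List ℕ) j.unpair.2, ?_⟩
            show ¬ (TSat _ _ _ ∨ TSat _ _ _)
            push_neg
            exact ⟨hl.2, hl.1⟩
        rw [heq]
        refine SelSigmaM.step α (fun j => max 1 (β j.unpair.1)) _ _ h1α
          (fun j => max_one_lt (hβ j.unpair.1) h1α) (fun j => ?_) (fun j => ?_)
        · exact (ih (β j.unpair.1) (hβ j.unpair.1) (ψ j.unpair.1)).2 (h2' j.unpair.1) _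
        · exact (ih (β j.unpair.1) (hβ j.unpair.1) (φ' j.unpair.1)).1 (h1' j.unpair.1) _
      | ge2b α' β xs φ' ψ h2 hβ h1' h2' =>
        have hmax : max (1 : Ordinal) α = α := max_eq_right (le_trans (by norm_num) h2)
        rw [hmax]
        have h1α : 1 < α := two_le_iff.1 h2
        have heq : {S : MStr | ¬ TSat S.1 s (.conj fun i => allIter (xs i) (.cor (φ' i) (ψ i)))} =
            ⋃ j : ℕ, ({S : MStr | ¬ TSat S.1
                (updList s (xs j.unpair.1) (Denumerable.ofNat (List ℕ) j.unpair.2)) (φ' j.unpair.1)} \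
              {S : MStr | TSat S.1
                (updList s (xs j.unpair.1) (Denumerable.ofNat (List ℕ) j.unpair.2)) (ψ j.unpair.1)}) := by
          ext S
          show (¬ ∀ i, TSat _ _ _) ↔ _
          push_neg
          simp only [Set.mem_iUnion, Set.mem_diff, Set.mem_setOf_eq]
          constructor
          · rintro ⟨i, hi⟩
            rw [TSat_allIter] at hi
            push_neg at hi
            obtain ⟨l, hl⟩ := hi
            have hl' : ¬ (TSat S.1 (updList s (xs i) l) (φ' i) ∨
                TSat S.1 (updList s (xs i) l) (ψ i)) := hl
            push_neg at hl'
            refine ⟨Nat.pair i (Encodable.encode l), ?_⟩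
            simp only [Nat.unpair_pair, Denumerable.ofNat_encode]
            exact ⟨hl'.1, hl'.2⟩
          · rintro ⟨j, hl⟩
            refine ⟨j.unpair.1, ?_⟩
            rw [TSat_allIter]
            push_neg
            refine ⟨Denumerable.ofNat (List ℕ) j.unpair.2, ?_⟩
            show ¬ (TSat _ _ _ ∨ TSat _ _ _)
            push_neg
            exact ⟨hl.1, hl.2⟩
        rw [heq]
        refine SelSigmaM.step α (fun j => max 1 (β j.unpair.1)) _ _ h1α
          (fun j => max_one_lt (hβ j.unpair.1) h1α) (fun j => ?_) (fun j => ?_)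
        · exact (ih (β j.unpair.1) (hβ j.unpair.1) (φ' j.unpair.1)).2 (h1' j.unpair.1) _
        · exact (ih (β j.unpair.1) (hβ j.unpair.1) (ψ j.unpair.1)).1 (h2' j.unpair.1) _
/-! ### Auxiliary lemmas for the hard direction -/

theorem selSigma_ge_one {α : Ordinal} {Z : Set MStr} (h : SelSigmaM α Z) : 1 ≤ α := by
  cases h with
  | base U hU => exact le_refl 1
  | step α' β B B' hα hβ hB hB' => exact le_of_lt hα

theorem BPB_GSet {α : Ordinal} {Z : Set MStr} (h : SelSigmaM α Z) (S : MStr) :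
    BPB (GSet Z S) := by
  induction h with
  | base U hU => exact BPB_open (openB_GSet hU S)
  | step α' β B B' hα hβ hB hB' ihB ihB' =>
    have : GSet (⋃ i, B i \ B' i) S = ⋃ i, (GSet (B i) S \ GSet (B' i) S) := by
      rw [GSet_iUnion]
      refine congrArg _ (funext fun i => GSet_diff)
    rw [this]
    exact BPB_iUnion fun i => BPB_diff (ihB i) (ihB' i)

theorem GSet_mono {Z Z' : Set MStr} (h : Z ⊆ Z') (S : MStr) : GSet Z S ⊆ GSet Z' S := by
  rintro g ⟨hg, hm⟩
  exact ⟨hg, h hm⟩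

/-- The condition recording the values of `s` on `d`. -/
def condOf (d : List ℕ) (s : ℕ → ℕ) : Cond := d.map fun x => (x, s x)

theorem mem_condOf {d : List ℕ} {s : ℕ → ℕ} {p : ℕ × ℕ} :
    p ∈ condOf d s ↔ ∃ x ∈ d, p = (x, s x) := by
  constructor
  · intro h
    rcases List.mem_map.1 h with ⟨x, hx, rfl⟩
    exact ⟨x, hx, rfl⟩
  · rintro ⟨x, hx, rfl⟩
    exact List.mem_map.2 ⟨x, hx, rfl⟩

theorem cinj_condOf {d : List ℕ} {s : ℕ → ℕ}
    (h : ∀ x ∈ d, ∀ y ∈ d, s x = s y → x = y) : CInj (condOf d s) := by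
  intro p hp q hq
  rcases mem_condOf.1 hp with ⟨x, hx, rfl⟩
  rcases mem_condOf.1 hq with ⟨y, hy, rfl⟩
  constructor
  · intro hxy; show s x = s y; rw [show x = y from hxy]
  · intro hxy; exact h x hx y hy hxy

theorem cext_condOf {d : List ℕ} {s g : ℕ → ℕ} :
    CExt (condOf d s) g ↔ ∀ x ∈ d, g x = s x := by
  constructor
  · intro h x hx
    exact h (x, s x) (mem_condOf.2 ⟨x, hx, rfl⟩)
  · intro h p hp
    rcases mem_condOf.1 hp with ⟨x, hx, rfl⟩
    exact h x hx

theorem comeager_congr_mem {v w : Cond} {A : Set (ℕ → ℕ)}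
    (h : ∀ p : ℕ × ℕ, p ∈ v ↔ p ∈ w) (hc : ComeagerIn v A) : ComeagerIn w A := by
  obtain ⟨D, hD, hG⟩ := hc
  have hsubvw : CSub v w := fun p hp => (h p).1 hp
  have hsubwv : CSub w v := fun p hp => (h p).2 hp
  refine ⟨D, ?_, ?_⟩
  · intro n x hx hxi
    exact hD n x (hsubvw.trans hx) hxi
  · intro g hb he hm
    exact hG g hb (fun p hp => he p (hsubvw p hp)) hm

theorem nonmeager_congr_mem {v w : Cond} {A : Set (ℕ → ℕ)}
    (h : ∀ p : ℕ × ℕ, p ∈ v ↔ p ∈ w) :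
    NonmeagerIn v A ↔ NonmeagerIn w A := by
  constructor
  · intro hn hc
    exact hn (comeager_congr_mem (fun p => (h p).symm) hc)
  · intro hn hc
    exact hn (comeager_congr_mem h hc)

theorem updList_map_get {s g : ℕ → ℕ} :
    ∀ xs : List ℕ, xs.Nodup → ∀ y ∈ xs, updList s xs (xs.map g) y = g y := by
  intro xs hnd y hy
  rcases List.mem_iff_get.1 hy with ⟨⟨i, hi⟩, rfl⟩
  have := updList_get (s := s) xs (xs.map g) hnd (by simp) i hi (by simpa using hi)
  rw [this]
  simp

/-- Formulas equivalent to `⊥` and `⊤` at level 1. -/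
theorem padFalsum : ∃ φ : TForm, TSigma.{u} 1 φ ∧ ∀ S s, ¬ TSat S s φ := by
  obtain ⟨φ, h1, h2⟩ := (pad 1 0 .falsum (by exact zero_le_one)).1 TSigma.falsum
  exact ⟨φ, h1, fun S s h => (h2 S s).1 h⟩

theorem padVerum : ∃ φ : TForm, TPi.{u} 1 φ ∧ ∀ S s, TSat S s φ := by
  obtain ⟨φ, h1, h2⟩ := (pad 1 0 .verum (by exact zero_le_one)).2 TPi.verum
  exact ⟨φ, h1, fun S s => (h2 S s).2 trivial⟩

/-- Semantic core of the inductive step. -/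
theorem step_semantics {B B' : ℕ → Set MStr} {βf : ℕ → Ordinal}
    (hB : ∀ i, SelSigmaM (βf i) (B i)) (hB' : ∀ i, SelSigmaM (βf i) (B' i))
    {u : Cond} (hu : CInj u) (S : MStr) :
    NonmeagerIn u (GSet (⋃ i, B i \ B' i) S) ↔
      ∃ i v, CSub u v ∧ CInj v ∧ NonmeagerIn v (GSet (B i) S) ∧
        ¬ NonmeagerIn v (GSet (B' i) S) := by
  have hGU : GSet (⋃ i, B i \ B' i) S = ⋃ i, (GSet (B i) S \ GSet (B' i) S) := by
    rw [GSet_iUnion]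
    exact congrArg _ (funext fun i => GSet_diff)
  rw [hGU]
  constructor
  · intro hnm
    obtain ⟨i, hnmi⟩ := nonmeager_iUnion hnm
    obtain ⟨v, hvi, hvs, hcom⟩ := localize
      (BPB_diff (BPB_GSet (hB i) S) (BPB_GSet (hB' i) S)) hu hnmi
    refine ⟨i, v, hvs, hvi, ?_, ?_⟩
    · intro hc
      obtain ⟨g, hgb, hge, hg1, hg2⟩ := generic_exists hvi (comeager_inter hcom hc)
      exact hg2 hg1.1
    · intro hnm'
      exact hnm' (comeager_mono_bij (fun g _ hg => hg.2) hcom)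
  · rintro ⟨i, v, hvs, hvi, h1, h2⟩
    have h2' : ComeagerIn v (GSet (B' i) S)ᶜ := not_not.1 h2
    have hnmv : NonmeagerIn v (GSet (B i) S \ GSet (B' i) S) := by
      intro hc
      refine h1 (comeager_mono_bij (fun g _ hg => ?_) (comeager_inter hc h2'))
      intro hgB
      exact hg.1 ⟨hgB, hg.2⟩
    have : NonmeagerIn v (⋃ i, (GSet (B i) S \ GSet (B' i) S)) :=
      nonmeager_mono_bij (fun g _ hg => Set.mem_iUnion.2 ⟨i, hg⟩) hnmv
    exact nonmeager_mono_cond hvs this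
/-! ### The master lemma: Vaught-transform formulas, base case -/

theorem master_base {U : Set MStr} (hU : ScottOpenM U) (d : List ℕ) (hd : d.Nodup) :
    ∃ θ : TForm, TSigma.{u} 1 θ ∧ ∀ (S : MStr) (s : ℕ → ℕ),
      (∀ x ∈ d, ∀ y ∈ d, s x = s y → x = y) →
      (TSat S.1 s θ ↔ NonmeagerIn (condOf d s) (GSet U S)) := by
  classical
  set Fof : ℕ → List (ℕ × List ℕ) := fun k => Denumerable.ofNat (List (ℕ × List ℕ)) k with hFof
  set newV : ℕ → List ℕ :=
    fun k => ((Fof k).flatMap Prod.snd).dedup.filter (fun x => ¬ x ∈ d) with hnewV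
  set pairsOf : ℕ → List (ℕ × List ℕ) :=
    fun k => (allPairs (d ++ newV k)).map (fun p => (1, [p.1, p.2])) with hpairsOf
  set XS : ℕ → List ℕ := fun k => if UpSet (Fof k) ⊆ U then newV k else [] with hXS
  set PSI : ℕ → TForm :=
    fun k => if UpSet (Fof k) ⊆ U then .fconj (Fof k ++ pairsOf k) else .falsum with hPSI
  have hnodupNew : ∀ k, (newV k).Nodup := fun k => (List.nodup_dedup _).filter _
  have hnewNotMem : ∀ k, ∀ x ∈ newV k, x ∉ d := by
    intro k x hx
    have := List.of_mem_filter hx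
    simpa using this
  have hddnodup : ∀ k, (d ++ newV k).Nodup := by
    intro k
    refine hd.append (hnodupNew k) ?_
    intro x hxd hxn
    exact hnewNotMem k x hxn hxd
  have hvarssplit : ∀ k, ∀ p ∈ Fof k, ∀ x ∈ p.2, x ∈ d ++ newV k := by
    intro k p hp x hx
    by_cases hxd : x ∈ d
    · exact List.mem_append.2 (Or.inl hxd)
    · refine List.mem_append.2 (Or.inr ?_)
      refine List.mem_filter.2 ⟨List.mem_dedup.2 (List.mem_flatMap.2 ⟨p, hp, hx⟩), by simpa using hxd⟩
  refine ⟨.disj fun k => exIter (XS k) (PSI k), TSigma.one XS PSI ?_, ?_⟩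
  · intro k
    show TSigma 0 (PSI k)
    rw [hPSI]
    simp only
    split
    · exact TSigma.fconj _
    · exact TSigma.falsum
  · intro S s hs
    constructor
    · rintro ⟨k, hk⟩
      by_cases hgood : UpSet (Fof k) ⊆ U
      swap
      · rw [TSat_exIter] at hk
        obtain ⟨l, hl⟩ := hk
        rw [hPSI] at hl
        simp only [if_neg hgood] at hl
        exact hl.elim
      rw [TSat_exIter] at hk
      obtain ⟨l, hl⟩ := hk
      set s' := updList s (XS k) l with hs'
      rw [hPSI] at hl
      simp only [if_pos hgood] at hl
      have hF : ∀ p ∈ Fof k, S.1 p.1 (p.2.map s') :=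
        fun p hp => hl p (List.mem_append.2 (Or.inl hp))
      have hpair : ∀ q ∈ allPairs (d ++ newV k), s' q.1 ≠ s' q.2 := by
        intro q hq
        have h1 : S.1 1 ([q.1, q.2].map s') :=
          hl (1, [q.1, q.2]) (List.mem_append.2 (Or.inr (List.mem_map.2 ⟨q, hq, rfl⟩)))
        have h2 := (S.2.2 _).1 h1
        obtain ⟨a, b, hab, heq⟩ := h2
        simp only [List.map_cons, List.map_nil, List.cons.injEq, and_true] at heq
        rw [heq.1, heq.2]
        exact hab
      have hinj' : ∀ x ∈ d ++ newV k, ∀ y ∈ d ++ newV k, s' x = s' y → x = y := by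
        intro x hx y hy hxy
        by_contra hne
        rcases allPairs_cover _ x y hx hy hne with hq | hq
        · exact hpair _ hq hxy
        · exact hpair _ hq hxy.symm
      have hvi : CInj (condOf (d ++ newV k) s') := cinj_condOf hinj'
      have hs'd : ∀ x ∈ d, s' x = s x := by
        intro x hx
        refine updList_eq_of_not_mem _ l x ?_
        rw [hXS]
        simp only [if_pos hgood]
        exact fun hmem => hnewNotMem k x hmem hx
      have hsubuv : CSub (condOf d s) (condOf (d ++ newV k) s') := by
        intro p hp
        rcases mem_condOf.1 hp with ⟨x, hx, rfl⟩
        refine mem_condOf.2 ⟨x, List.mem_append.2 (Or.inl hx), ?_⟩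
        rw [hs'd x hx]
      refine nonmeager_of_comeager hvi hsubuv (comeagerIn_of_all ?_)
      intro g hbg hge
      refine ⟨hbg, hgood ?_⟩
      rw [actM_mem_upSet]
      intro p hp
      have hmapeq : p.2.map g = p.2.map s' := by
        refine List.map_congr_left fun x hx => ?_
        exact (cext_condOf.1 hge) x (hvarssplit k p hp x hx)
      show S.1 p.1 (p.2.map g)
      rw [hmapeq]
      exact hF p hp
    · intro hnm
      have hex : ∃ g : ℕ → ℕ, Function.Bijective g ∧ CExt (condOf d s) g ∧ g ∈ GSet U S := by
        by_contra hno
        push_neg at hno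
        exact hnm (comeagerIn_of_all fun g hb he hg => hno g hb he hg)
      obtain ⟨g, hbg, hge, hg, hmem⟩ := hex
      obtain ⟨F₀, hF1, hF2⟩ := (scottOpen_basis hU _).1 hmem
      have hFk : Fof (Encodable.encode F₀) = F₀ := by
        rw [hFof]
        exact Denumerable.ofNat_encode F₀
      refine ⟨Encodable.encode F₀, ?_⟩
      set k := Encodable.encode F₀ with hk
      have hgoodk : UpSet (Fof k) ⊆ U := by rw [hFk]; exact hF2
      rw [TSat_exIter]
      refine ⟨(newV k).map g, ?_⟩
      set s' := updList s (XS k) ((newV k).map g) with hs'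
      have hXSk : XS k = newV k := by rw [hXS]; simp only [if_pos hgoodk]
      have hs'new : ∀ x ∈ newV k, s' x = g x := by
        intro x hx
        rw [hs', hXSk]
        exact updList_map_get (newV k) (hnodupNew k) x hx
      have hs'd : ∀ x ∈ d, s' x = s x := by
        intro x hx
        rw [hs', hXSk]
        exact updList_eq_of_not_mem _ _ x (fun hmem => hnewNotMem k x hmem hx)
      have hs'g : ∀ x ∈ d ++ newV k, s' x = g x := by
        intro x hx
        rcases List.mem_append.1 hx with hx | hx
        · rw [hs'd x hx]
          exact ((cext_condOf.1 hge) x hx).symm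
        · exact hs'new x hx
      rw [hPSI]
      simp only [if_pos hgoodk]
      intro p hp
      rcases List.mem_append.1 hp with hp | hp
      · have hmapeq : p.2.map s' = p.2.map g :=
          List.map_congr_left fun x hx => hs'g x (hvarssplit k p hp x hx)
        show S.1 p.1 (p.2.map s')
        rw [hmapeq]
        exact hF1 p (by rwa [hFk] at hp)
      · rcases List.mem_map.1 hp with ⟨q, hq, rfl⟩
        show S.1 1 ([q.1, q.2].map s')
        refine (S.2.2 _).2 ⟨s' q.1, s' q.2, ?_, by simp⟩
        intro heq
        rw [hs'g q.1 (allPairs_mem _ q hq).1, hs'g q.2 (allPairs_mem _ q hq).2] at heq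
        exact allPairs_ne _ (hddnodup k) q hq (hbg.1 heq)
/-! ### The master lemma: inductive step -/

theorem master_step {α : Ordinal.{u}} {βf : ℕ → Ordinal.{u}} {B B' : ℕ → Set MStr}
    (hα : 1 < α) (hβ : ∀ i, βf i < α)
    (hB : ∀ i, SelSigmaM (βf i) (B i)) (hB' : ∀ i, SelSigmaM (βf i) (B' i))
    (ihB : ∀ i (d : List ℕ), d.Nodup → ∃ θ, TSigma (βf i) θ ∧ ∀ (S : MStr) (s : ℕ → ℕ),
      (∀ x ∈ d, ∀ y ∈ d, s x = s y → x = y) →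
      (TSat S.1 s θ ↔ NonmeagerIn (condOf d s) (GSet (B i) S)))
    (ihB' : ∀ i (d : List ℕ), d.Nodup → ∃ θ, TSigma (βf i) θ ∧ ∀ (S : MStr) (s : ℕ → ℕ),
      (∀ x ∈ d, ∀ y ∈ d, s x = s y → x = y) →
      (TSat S.1 s θ ↔ NonmeagerIn (condOf d s) (GSet (B' i) S)))
    (d : List ℕ) (hd : d.Nodup) :
    ∃ θ : TForm, TSigma α θ ∧ ∀ (S : MStr) (s : ℕ → ℕ),
      (∀ x ∈ d, ∀ y ∈ d, s x = s y → x = y) →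
      (TSat S.1 s θ ↔ NonmeagerIn (condOf d s) (GSet (⋃ i, B i \ B' i) S)) := by
  classical
  have hβ1 : ∀ i, 1 ≤ βf i := fun i => selSigma_ge_one (hB i)
  obtain ⟨pF, hpF1, hpF2⟩ := padFalsum.{u}
  obtain ⟨pV, hpV1, hpV2⟩ := padVerum.{u}
  set goodJ : ℕ → Prop := fun j => (Denumerable.ofNat (List ℕ) j.unpair.2).Nodup ∧
    ∀ x ∈ Denumerable.ofNat (List ℕ) j.unpair.2, x ∉ d with hgoodJ
  have pkg : ∀ j : ℕ, ∃ (lev : Ordinal.{u}) (xsl : List ℕ) (A C : TForm),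
      lev < α ∧ TSigma lev A ∧ TPi lev C ∧
      (goodJ j → xsl = Denumerable.ofNat (List ℕ) j.unpair.2 ∧
        ∀ (S : MStr) (s : ℕ → ℕ), (∀ x ∈ d, ∀ y ∈ d, s x = s y → x = y) →
          (TSat S.1 s (exIter xsl (.cand A C)) ↔
            ∃ s' : ℕ → ℕ, (∀ x ∈ d, s' x = s x) ∧
              (∀ x ∈ d ++ xsl, ∀ y ∈ d ++ xsl, s' x = s' y → x = y) ∧
              NonmeagerIn (condOf (d ++ xsl) s') (GSet (B j.unpair.1) S) ∧
              ¬ NonmeagerIn (condOf (d ++ xsl) s') (GSet (B' j.unpair.1) S))) ∧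
      (¬ goodJ j → ∀ (S : MStr) (s : ℕ → ℕ), ¬ TSat S.1 s (exIter xsl (.cand A C))) := by
    intro j
    by_cases hg : goodJ j
    · set i0 := j.unpair.1 with hi0
      set xs0 := Denumerable.ofNat (List ℕ) j.unpair.2 with hxs0
      have hddn : (d ++ xs0).Nodup := hd.append hg.1 (fun x hxd hxn => hg.2 x hxn hxd)
      obtain ⟨φΔ, hφ1, hφ2⟩ := ihB i0 (d ++ xs0) hddn
      obtain ⟨φΔ', hφ'1, hφ'2⟩ := ihB' i0 (d ++ xs0) hddn
      obtain ⟨dP, hdP1, hdP2⟩ := (pad (βf i0) 1 (distForm (d ++ xs0)) (hβ1 i0)).2 (distForm_pi _)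
      have hneg : TPi (βf i0) φΔ'.neg := (neg_classes (βf i0) φΔ').1 hφ'1
      obtain ⟨C, hC1, hC2⟩ := combinePi (βf i0) dP φΔ'.neg (hβ1 i0) hdP1 hneg
      refine ⟨βf i0, xs0, φΔ, C, hβ i0, hφ1, hC1, fun _ => ⟨rfl, ?_⟩, fun hng => absurd hg hng⟩
      intro S s hs
      rw [TSat_exIter]
      constructor
      · rintro ⟨l, hl⟩
        have hA : TSat S.1 (updList s xs0 l) φΔ := hl.1
        have hC' : TSat S.1 (updList s xs0 l) C := hl.2
        set s' := updList s xs0 l with hs'def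
        have hCparts := (hC2 S.1 s').1 hC'
        have hdist : TSat S.1 s' (distForm (d ++ xs0)) := (hdP2 S.1 s').1 hCparts.1
        have hnegsat : TSat S.1 s' φΔ'.neg := hCparts.2
        have hpair : ∀ q ∈ allPairs (d ++ xs0), s' q.1 ≠ s' q.2 := by
          intro q hq heq
          exact (TSat_distForm.1 hdist q hq) ((S.2.1 _).2 ⟨s' q.2, by rw [heq]⟩)
        have hinj' : ∀ x ∈ d ++ xs0, ∀ y ∈ d ++ xs0, s' x = s' y → x = y := by
          intro x hx y hy hxy
          by_contra hne
          rcases allPairs_cover _ x y hx hy hne with hq | hq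
          · exact hpair _ hq hxy
          · exact hpair _ hq hxy.symm
        refine ⟨s', ?_, hinj', (hφ2 S s' hinj').1 hA, ?_⟩
        · intro x hx
          exact updList_eq_of_not_mem _ _ x (fun hmem => hg.2 x hmem hx)
        · intro hnm
          exact (TSat_neg φΔ' s').1 hnegsat ((hφ'2 S s' hinj').2 hnm)
      · rintro ⟨s', hds, hinj', h1, h2⟩
        refine ⟨xs0.map s', ?_⟩
        set s'' := updList s xs0 (xs0.map s') with hs''def
        have hs''eq : ∀ x ∈ d ++ xs0, s'' x = s' x := by
          intro x hx
          rcases List.mem_append.1 hx with hx | hx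
          · rw [hs''def, updList_eq_of_not_mem _ _ x (fun hmem => hg.2 x hmem hx)]
            exact (hds x hx).symm
          · exact updList_map_get xs0 hg.1 x hx
        have hinj'' : ∀ x ∈ d ++ xs0, ∀ y ∈ d ++ xs0, s'' x = s'' y → x = y := by
          intro x hx y hy hxy
          exact hinj' x hx y hy (by rw [← hs''eq x hx, ← hs''eq y hy]; exact hxy)
        have hcond : condOf (d ++ xs0) s'' = condOf (d ++ xs0) s' :=
          List.map_congr_left fun x hx => by rw [hs''eq x hx]
        refine ⟨(hφ2 S s'' hinj'').2 (by rw [hcond]; exact h1), ?_⟩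
        refine (hC2 S.1 s'').2 ⟨(hdP2 S.1 s'').2 ?_, (TSat_neg φΔ' s'').2 ?_⟩
        · rw [TSat_distForm]
          intro q hq h0
          obtain ⟨a, ha⟩ := (S.2.1 _).1 h0
          simp only [List.cons.injEq, and_true] at ha
          have : s'' q.1 = s'' q.2 := by rw [ha.1, ha.2]
          exact allPairs_ne _ hddn q hq
            (hinj'' q.1 (allPairs_mem _ q hq).1 q.2 (allPairs_mem _ q hq).2 this)
        · intro hsat
          exact h2 (by rw [← hcond]; exact (hφ'2 S s'' hinj'').1 hsat)
    · refine ⟨1, [], pF, pV, hα, hpF1, hpV1, fun hgg => absurd hgg hg, fun _ S s hT => ?_⟩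
      exact hpF2 S.1 s hT.1
  choose lev xsl A C hlev hA hC hgood hbad using pkg
  refine ⟨.disj fun j => exIter (xsl j) (.cand (A j) (C j)),
    TSigma.ge2a α lev xsl A C (two_le_iff.2 hα) hlev hA hC, ?_⟩
  intro S s hs
  rw [step_semantics hB hB' (cinj_condOf hs) S]
  constructor
  · rintro ⟨j, hj⟩
    by_cases hg : goodJ j
    · obtain ⟨hxsleq, hequiv⟩ := hgood j hg
      obtain ⟨s', hds, hinj', h1, h2⟩ := (hequiv S s hs).1 hj
      refine ⟨j.unpair.1, condOf (d ++ xsl j) s', ?_, cinj_condOf hinj', h1, h2⟩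
      intro p hp
      rcases mem_condOf.1 hp with ⟨x, hx, rfl⟩
      refine mem_condOf.2 ⟨x, List.mem_append.2 (Or.inl hx), ?_⟩
      rw [hds x hx]
    · exact absurd hj (hbad j hg S s)
  · rintro ⟨i0, v, hsub, hvinj, h1, h2⟩
    set xs0 := (v.map Prod.fst).dedup.filter (fun x => ¬ x ∈ d) with hxs0def
    set j := Nat.pair i0 (Encodable.encode xs0) with hjdef
    have hju1 : j.unpair.1 = i0 := by rw [hjdef, Nat.unpair_pair]
    have hju2 : Denumerable.ofNat (List ℕ) j.unpair.2 = xs0 := by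
      rw [hjdef, Nat.unpair_pair]
      exact Denumerable.ofNat_encode xs0
    have hxs0nd : xs0.Nodup := (List.nodup_dedup _).filter _
    have hxs0d : ∀ x ∈ xs0, x ∉ d := by
      intro x hx
      simpa using List.of_mem_filter hx
    have hgj : goodJ j := by
      rw [hgoodJ]
      refine ⟨?_, ?_⟩ <;> rw [hju2]
      · exact hxs0nd
      · exact hxs0d
    obtain ⟨hxsleq, hequiv⟩ := hgood j hgj
    have hxsl : xsl j = xs0 := by rw [hxsleq, hju2]
    obtain ⟨e, he⟩ := exists_bij_ext v hvinj
    set s' : ℕ → ℕ := fun x => if x ∈ d then s x else e x with hs'def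
    have hs'd : ∀ x ∈ d, s' x = s x := by
      intro x hx
      rw [hs'def]
      simp only [if_pos hx]
    have hsd_e : ∀ x ∈ d, s x = e x := by
      intro x hx
      exact (he (x, s x) (hsub _ (mem_condOf.2 ⟨x, hx, rfl⟩))).symm
    have hs'e : ∀ x ∈ d ++ xs0, s' x = e x := by
      intro x hx
      rcases List.mem_append.1 hx with hx | hx
      · rw [hs'd x hx]; exact hsd_e x hx
      · rw [hs'def]
        simp only [if_neg (hxs0d x hx)]
    have hinj' : ∀ x ∈ d ++ xs0, ∀ y ∈ d ++ xs0, s' x = s' y → x = y := by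
      intro x hx y hy hxy
      apply e.injective
      rw [← hs'e x hx, ← hs'e y hy]
      exact hxy
    have hvm : ∀ p : ℕ × ℕ, p ∈ condOf (d ++ xs0) s' ↔ p ∈ v := by
      intro p
      constructor
      · intro hp
        rcases mem_condOf.1 hp with ⟨x, hx, rfl⟩
        rcases List.mem_append.1 hx with hxd | hxn
        · rw [show s' x = s x from hs'd x hxd]
          exact hsub _ (mem_condOf.2 ⟨x, hxd, rfl⟩)
        · have hx1 : x ∈ v.map Prod.fst := List.mem_dedup.1 (List.mem_filter.1 hxn).1
          rcases List.mem_map.1 hx1 with ⟨q, hq, hq1⟩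
          have : s' x = q.2 := by
            rw [hs'e x hx, ← hq1]
            exact he q hq
          rw [show (x, s' x) = q from Prod.ext (by rw [hq1]) this]
          exact hq
      · intro hp
        have hx1 : p.1 ∈ d ++ xs0 := by
          by_cases hxd : p.1 ∈ d
          · exact List.mem_append.2 (Or.inl hxd)
          · refine List.mem_append.2 (Or.inr ?_)
            refine List.mem_filter.2 ⟨List.mem_dedup.2 (List.mem_map.2 ⟨p, hp, rfl⟩), ?_⟩
            simpa using hxd
        have hval : s' p.1 = p.2 := by
          rw [hs'e p.1 hx1]
          exact he p hp
        refine mem_condOf.2 ⟨p.1, hx1, Prod.ext rfl hval.symm⟩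
    refine ⟨j, (hequiv S s hs).2 ⟨s', hs'd, ?_, ?_, ?_⟩⟩
    · rw [hxsl]; exact hinj'
    · rw [hxsl, hju1]
      exact (nonmeager_congr_mem (fun p => (hvm p).symm)).1 h1
    · rw [hxsl, hju1]
      intro hnm
      exact h2 ((nonmeager_congr_mem hvm).1 hnm)
/-! ### The master lemma and the main theorem -/

theorem master {α : Ordinal.{u}} {Z : Set MStr} (h : SelSigmaM α Z) :
    ∀ d : List ℕ, d.Nodup → ∃ θ : TForm, TSigma α θ ∧ ∀ (S : MStr) (s : ℕ → ℕ),
      (∀ x ∈ d, ∀ y ∈ d, s x = s y → x = y) →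
      (TSat S.1 s θ ↔ NonmeagerIn (condOf d s) (GSet Z S)) := by
  induction h with
  | base U hU => exact fun d hd => master_base hU d hd
  | step α' β B B' hα hβ hB hB' ihB ihB' =>
    exact fun d hd => master_step hα hβ hB hB' ihB ihB' d hd

theorem cinj_nil : CInj ([] : Cond) := fun p hp => absurd hp List.not_mem_nil

/-- For an isomorphism-invariant `Y`, membership is equivalent to the Vaught
transform at the empty condition. -/
theorem invariant_nonmeager {Y : Set MStr}
    (hYinv : ∀ S S' : MStr, S ∈ Y → Iso S.1 S'.1 → S' ∈ Y) (S : MStr) :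
    S ∈ Y ↔ NonmeagerIn ([] : Cond) (GSet Y S) := by
  constructor
  · intro hSY hc
    obtain ⟨g, hbij, -, hmem⟩ := generic_exists cinj_nil hc
    exact hmem ⟨hbij, hYinv S (actM g hbij S) hSY (iso_actM S g hbij)⟩
  · intro hnm
    by_contra hSY
    refine hnm (comeagerIn_of_all fun g hb _ => ?_)
    rintro ⟨hg, hmem⟩
    exact hSY (hYinv (actM g hg S) S hmem (iso_symm (iso_actM S g hg)))
/-- Boldface Lopez–Escobar theorem for the Scott topology: an
isomorphism-invariant class `B ⊆ Mod(τ)` is (boldface) `Π⁰_α` in Selivanov's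
hierarchy iff `B = Mod(φ)` for some `Π^p_α` sentence `φ`, for every countable
`α ≥ 1`. -/
theorem boldface_lopez_escobar (α : Ordinal) (hα : 1 ≤ α)
    (hcount : α.card ≤ Cardinal.aleph0) (B : Set MStr)
    (hinv : ∀ S S' : MStr, S ∈ B → Iso S.1 S'.1 → S' ∈ B) :
    (∃ Y : Set MStr, SelSigmaM α Y ∧ B = Yᶜ) ↔
    (∃ φ : TForm, TPi α φ ∧ B = {S : MStr | TSat S.1 (fun _ => 0) φ}) := by
  constructor
  · rintro ⟨Y, hY, hBY⟩
    obtain ⟨θ, hθ1, hθ2⟩ := master hY [] List.nodup_nil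
    refine ⟨θ.neg, (neg_classes α θ).1 hθ1, ?_⟩
    have hYinv : ∀ S S' : MStr, S ∈ Y → Iso S.1 S'.1 → S' ∈ Y := by
      intro S S' hSY hiso
      by_contra hS'Y
      have hS'B : S' ∈ B := by rw [hBY]; exact hS'Y
      have : S ∈ B := hinv S' S hS'B (iso_symm hiso)
      rw [hBY] at this
      exact this hSY
    ext S
    have hiff := hθ2 S (fun _ => 0) (fun x hx => absurd hx List.not_mem_nil)
    have hcond : condOf [] (fun _ => 0) = ([] : Cond) := rfl
    rw [hcond] at hiff
    constructor
    · intro hSB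
      have hSY : S ∉ Y := by
        rw [hBY] at hSB
        exact hSB
      show TSat S.1 (fun _ => 0) θ.neg
      rw [TSat_neg, hiff]
      intro hnm
      exact hSY ((invariant_nonmeager hYinv S).2 hnm)
    · intro hSθ
      have : ¬ TSat S.1 (fun _ => 0) θ := (TSat_neg θ _).1 hSθ
      rw [hiff] at this
      rw [hBY]
      intro hSY
      exact this ((invariant_nonmeager hYinv S).1 hSY)
  · rintro ⟨φ, hφ, hBφ⟩
    refine ⟨{S : MStr | TSat S.1 (fun _ => 0) φ.neg}, ?_, ?_⟩
    · have := (easy_direction α φ.neg).1 ((neg_classes α φ).2 hφ) (fun _ => 0)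
      rwa [max_eq_right hα] at this
    · rw [hBφ]
      ext S
      simp only [Set.mem_setOf_eq, Set.mem_compl_iff]
      rw [TSat_neg]
      exact not_not.symm

end LE
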